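/- arXiv:2403.17051 — 9 statements merged into one kernel-verified Lean document; each statement's English description precedes it below -/
import Mathlib

section
/- Let x_0,…,x_{n−3} be real numbers with a fixed total order refining their order as reals, and for each index i define k_i = max{j : x_{i−ℓ} ≥ x_i for 0 ≤ ℓ ≤ j} and ℓ_i = max{j : x_{i+ℓ} ≥ x_i for 0 ≤ ℓ ≤ j} (counting strictly larger elements immediately before and after x_i in the total order). Then in the alternating sum H(x) = Σ_{a=0}^{n−3} x_a + 2·Σ_{a=0}^{n−4} Σ_{b=a+1}^{n−3} (−1)^{b−a}·min(x_a,…,x_b), the total coefficient of x_i equals +1 if k_i and ℓ_i are both even, and −1 otherwise. -/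
/-- Let `x_0, …, x_{N-1}` (with `N = n - 2`) be reals, distinct on the relevant range,
let `i < N`, and let `k = k_i` and `l = ℓ_i` be the numbers of consecutive larger elements
immediately before and after `x_i` (characterized by the hypotheses below). Then in the
alternating sum
`H(x) = Σ_{a=0}^{N-1} x_a + 2·Σ_{a=0}^{N-2} Σ_{b=a+1}^{N-1} (-1)^{b-a}·min(x_a,…,x_b)`,
the total contribution of `x_i` (its own term from the first sum, plus the signed,
doubled window terms whose minimum is attained at `i`) equals `x_i` if `k_i` and `ℓ_i`
are both even, and `-x_i` otherwise. -/
theorem contribution_of_local_min (n N : ℕ) (hN : N = n - 2) (hn : 4 ≤ n) (x : ℕ → ℝ)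
    (hinj : ∀ a < N, ∀ b < N, a ≠ b → x a ≠ x b)
    (i : ℕ) (hi : i < N) (k l : ℕ)
    (hk0 : k ≤ i)
    (hk1 : ∀ m, 1 ≤ m → m ≤ k → x i < x (i - m))
    (hk2 : k = i ∨ x (i - (k + 1)) < x i)
    (hl0 : i + l < N)
    (hl1 : ∀ m, 1 ≤ m → m ≤ l → x i < x (i + m))
    (hl2 : i + l + 1 = N ∨ x (i + l + 1) < x i) :
    x i + 2 * ∑ a ∈ Finset.range N, ∑ b ∈ Finset.Ico (a + 1) N,
        (if a ≤ i ∧ i ≤ b ∧ ∀ t ∈ Finset.Icc a b, x i ≤ x t then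
          (-1 : ℝ) ^ (b - a) * x i else 0) =
      if Even k ∧ Even l then x i else -x i := by
  classical
  -- Step 1: replace the minimality condition by an interval condition.
  have hcond : ∀ a < N, ∀ b, a < b → b < N →
      ((a ≤ i ∧ i ≤ b ∧ ∀ t ∈ Finset.Icc a b, x i ≤ x t) ↔
       (i - k ≤ a ∧ a ≤ i ∧ i ≤ b ∧ b ≤ i + l)) := by
    intro a ha b hab hb
    constructor
    · rintro ⟨h1, h2, h3⟩
      refine ⟨?_, h1, h2, ?_⟩
      · by_contra hc
        push_neg at hc
        rcases hk2 with h | h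
        · omega
        · have := h3 (i - (k + 1)) (Finset.mem_Icc.mpr ⟨by omega, by omega⟩)
          linarith
      · by_contra hc
        push_neg at hc
        rcases hl2 with h | h
        · omega
        · have := h3 (i + l + 1) (Finset.mem_Icc.mpr ⟨by omega, by omega⟩)
          linarith
    · rintro ⟨h0, h1, h2, h3⟩
      refine ⟨h1, h2, ?_⟩
      intro t ht
      rw [Finset.mem_Icc] at ht
      rcases lt_trichotomy t i with h | h | h
      · have hm := hk1 (i - t) (by omega) (by omega)
        have he : i - (i - t) = t := by omega
        rw [he] at hm
        linarith
      · simp [h]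
      · have hm := hl1 (t - i) (by omega) (by omega)
        have he : i + (t - i) = t := by omega
        rw [he] at hm
        linarith
  have hstep1 : (∑ a ∈ Finset.range N, ∑ b ∈ Finset.Ico (a + 1) N,
        (if a ≤ i ∧ i ≤ b ∧ ∀ t ∈ Finset.Icc a b, x i ≤ x t then
          (-1 : ℝ) ^ (b - a) * x i else 0)) =
      ∑ a ∈ Finset.range N, ∑ b ∈ Finset.Ico (a + 1) N,
        (if i - k ≤ a ∧ a ≤ i ∧ i ≤ b ∧ b ≤ i + l then
          (-1 : ℝ) ^ (b - a) * x i else 0) := by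
    refine Finset.sum_congr rfl fun a ha => Finset.sum_congr rfl fun b hb => ?_
    rw [Finset.mem_range] at ha
    rw [Finset.mem_Ico] at hb
    rw [if_congr (hcond a ha b (by omega) hb.2) rfl rfl]
  rw [hstep1]
  -- Step 2: extend the inner sum to `range N` with an explicit `a < b` condition.
  have hstep2 : ∀ a : ℕ, (∑ b ∈ Finset.Ico (a + 1) N,
        (if i - k ≤ a ∧ a ≤ i ∧ i ≤ b ∧ b ≤ i + l then
          (-1 : ℝ) ^ (b - a) * x i else 0)) =
      ∑ b ∈ Finset.range N,
        (if a < b ∧ i - k ≤ a ∧ a ≤ i ∧ i ≤ b ∧ b ≤ i + l then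
          (-1 : ℝ) ^ (b - a) * x i else 0) := by
    intro a
    have hfi : (Finset.range N).filter (fun b => a < b) = Finset.Ico (a + 1) N := by
      ext b
      simp only [Finset.mem_filter, Finset.mem_range, Finset.mem_Ico]
      omega
    rw [← hfi, Finset.sum_filter]
    refine Finset.sum_congr rfl fun b _ => ?_
    by_cases h : a < b
    · simp [h]
    · simp [h]
  simp only [hstep2]
  -- Step 3: diagonal trick, pointwise identity.
  have hpt : ∀ a b : ℕ,
      (if a < b ∧ i - k ≤ a ∧ a ≤ i ∧ i ≤ b ∧ b ≤ i + l then
          (-1 : ℝ) ^ (b - a) * x i else 0) =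
      (if i - k ≤ a ∧ a ≤ i ∧ i ≤ b ∧ b ≤ i + l then
          (-1 : ℝ) ^ (b - a) * x i else 0) -
      (if a = i ∧ b = i then x i else 0) := by
    intro a b
    by_cases hP : i - k ≤ a ∧ a ≤ i ∧ i ≤ b ∧ b ≤ i + l
    · by_cases hab : a < b
      · rw [if_pos ⟨hab, hP⟩, if_pos hP, if_neg (by omega)]
        ring
      · have ha : a = i ∧ b = i := by omega
        have hba : b - a = 0 := by omega
        rw [if_neg (by tauto), if_pos hP, if_pos ha, hba, pow_zero, one_mul]
        ring
    · have : ¬(a = i ∧ b = i) := by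
        rintro ⟨rfl, rfl⟩
        exact hP ⟨by omega, le_refl _, le_refl _, by omega⟩
      rw [if_neg (by tauto), if_neg hP, if_neg this]
      ring
  simp only [hpt, Finset.sum_sub_distrib]
  -- Step 4: compute the diagonal sum.
  have hdiag : (∑ a ∈ Finset.range N, ∑ b ∈ Finset.range N,
      (if a = i ∧ b = i then x i else 0)) = x i := by
    rw [Finset.sum_eq_single i]
    · rw [Finset.sum_eq_single i]
      · simp
      · intro b _ hb
        simp [hb]
      · intro h
        exact absurd (Finset.mem_range.mpr hi) h
    · intro a _ ha
      apply Finset.sum_eq_zero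
      intro b _
      simp [ha]
    · intro h
      exact absurd (Finset.mem_range.mpr hi) h
  rw [hdiag]
  -- Step 5: the main double sum factors over the two intervals.
  have hmain : (∑ a ∈ Finset.range N, ∑ b ∈ Finset.range N,
      (if i - k ≤ a ∧ a ≤ i ∧ i ≤ b ∧ b ≤ i + l then
          (-1 : ℝ) ^ (b - a) * x i else 0)) =
      (∑ a ∈ Finset.Icc (i - k) i, ∑ b ∈ Finset.Icc i (i + l),
        (-1 : ℝ) ^ (b - a) * x i) := by
    have h1 : ∀ a b : ℕ,
        (if i - k ≤ a ∧ a ≤ i ∧ i ≤ b ∧ b ≤ i + l then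
          (-1 : ℝ) ^ (b - a) * x i else 0) =
        (if a ∈ Finset.Icc (i - k) i then
          (if b ∈ Finset.Icc i (i + l) then (-1 : ℝ) ^ (b - a) * x i else 0) else 0) := by
      intro a b
      simp only [Finset.mem_Icc]
      by_cases hP : i - k ≤ a ∧ a ≤ i ∧ i ≤ b ∧ b ≤ i + l
      · rw [if_pos hP, if_pos ⟨hP.1, hP.2.1⟩, if_pos ⟨hP.2.2.1, hP.2.2.2⟩]
      · by_cases hA : i - k ≤ a ∧ a ≤ i
        · rw [if_pos hA, if_neg hP, if_neg (by tauto)]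
        · rw [if_neg hA, if_neg hP]
    simp only [h1]
    have h2 : ∀ a : ℕ, (∑ b ∈ Finset.range N,
        (if a ∈ Finset.Icc (i - k) i then
          (if b ∈ Finset.Icc i (i + l) then (-1 : ℝ) ^ (b - a) * x i else 0) else 0)) =
        (if a ∈ Finset.Icc (i - k) i then
          (∑ b ∈ Finset.range N,
            (if b ∈ Finset.Icc i (i + l) then (-1 : ℝ) ^ (b - a) * x i else 0)) else 0) := by
      intro a
      split <;> simp
    simp only [h2]
    rw [Finset.sum_ite_mem, Finset.inter_eq_right.mpr
      (by intro a ha; rw [Finset.mem_Icc] at ha; rw [Finset.mem_range]; omega)]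
    refine Finset.sum_congr rfl fun a _ => ?_
    rw [Finset.sum_ite_mem, Finset.inter_eq_right.mpr
      (by intro b hb; rw [Finset.mem_Icc] at hb; rw [Finset.mem_range]; omega)]
  rw [hmain]
  -- Step 6: factor the sign sums.
  have hfac : (∑ a ∈ Finset.Icc (i - k) i, (-1 : ℝ) ^ (i - a)) *
      (∑ b ∈ Finset.Icc i (i + l), (-1 : ℝ) ^ (b - i)) * x i =
      (∑ a ∈ Finset.Icc (i - k) i, ∑ b ∈ Finset.Icc i (i + l),
        (-1 : ℝ) ^ (b - a) * x i) := by
    rw [Finset.sum_mul_sum, Finset.sum_mul]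
    refine Finset.sum_congr rfl fun a ha => ?_
    rw [Finset.mem_Icc] at ha
    rw [Finset.sum_mul]
    refine Finset.sum_congr rfl fun b hb => ?_
    rw [Finset.mem_Icc] at hb
    have hba : b - a = (i - a) + (b - i) := by omega
    rw [hba, pow_add]
  rw [← hfac]
  -- Step 7: evaluate the two geometric-type sums.
  have hK : (∑ a ∈ Finset.Icc (i - k) i, (-1 : ℝ) ^ (i - a)) =
      if Even k then 1 else 0 := by
    rw [← Finset.Ico_add_one_right_eq_Icc, Finset.sum_Ico_eq_sum_range]
    have hr : i + 1 - (i - k) = k + 1 := by omega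
    rw [hr]
    have : ∀ j ∈ Finset.range (k + 1),
        (-1 : ℝ) ^ (i - (i - k + j)) = (-1 : ℝ) ^ (k + 1 - 1 - j) := by
      intro j hj
      rw [Finset.mem_range] at hj
      congr 1
      omega
    rw [Finset.sum_congr rfl this, Finset.sum_range_reflect (fun j => (-1 : ℝ) ^ j),
      neg_one_geom_sum]
    by_cases h : Even k <;> simp [h, Nat.even_add_one, Nat.not_even_iff_odd]
  have hL : (∑ b ∈ Finset.Icc i (i + l), (-1 : ℝ) ^ (b - i)) =
      if Even l then 1 else 0 := by
    rw [← Finset.Ico_add_one_right_eq_Icc, Finset.sum_Ico_eq_sum_range]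
    have hr : i + l + 1 - i = l + 1 := by omega
    rw [hr]
    have : ∀ j ∈ Finset.range (l + 1),
        (-1 : ℝ) ^ (i + j - i) = (-1 : ℝ) ^ j := by
      intro j _
      congr 1
      omega
    rw [Finset.sum_congr rfl this, neg_one_geom_sum]
    by_cases h : Even l <;> simp [h, Nat.even_add_one, Nat.not_even_iff_odd]
  rw [hK, hL]
  by_cases hek : Even k <;> by_cases hel : Even l <;>
    simp [hek, hel] <;> ring
end

section
/- For n even and any x_0,…,x_{n−3} ∈ ℝ, the function H(x) = Σ_{a=0}^{n−3} x_a + 2·Σ_{a=0}^{n−4} Σ_{b=a+1}^{n−3} (−1)^{b−a}·min(x_a,…,x_b) satisfies H(x) ≥ 0. -/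
/-- `wmin x a b` is the minimum `min(x_a, x_{a+1}, …, x_b)` of a window of consecutive
variables (as an infimum of the image of the finite nonempty interval). -/
noncomputable def wmin (x : ℕ → ℝ) (a b : ℕ) : ℝ := sInf (x '' Set.Icc a b)

/-- The piecewise-linear function
`H(x) = Σ_{a=0}^{N-1} x_a + 2·Σ_{a=0}^{N-2} Σ_{b=a+1}^{N-1} (-1)^{b-a}·min(x_a,…,x_b)`,
where `N = n - 2` so that the variables are `x_0, …, x_{n-3}`. -/
noncomputable def Hfun (N : ℕ) (x : ℕ → ℝ) : ℝ :=
  (∑ a ∈ Finset.range N, x a) +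
    2 * ∑ a ∈ Finset.range N, ∑ b ∈ Finset.Ico (a + 1) N, (-1 : ℝ) ^ (b - a) * wmin x a b

lemma wmin_le (x : ℕ → ℝ) {a b m : ℕ} (h : m ∈ Set.Icc a b) : wmin x a b ≤ x m := by
  apply csInf_le ((Set.finite_Icc a b).image x).bddBelow
  exact Set.mem_image_of_mem x h

lemma le_wmin (x : ℕ → ℝ) {a b : ℕ} (hab : a ≤ b) {c : ℝ}
    (hc : ∀ i, a ≤ i → i ≤ b → c ≤ x i) : c ≤ wmin x a b := by
  apply le_csInf (Set.Nonempty.image x (Set.nonempty_Icc.2 hab))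
  rintro y ⟨i, hi, rfl⟩
  exact hc i hi.1 hi.2

lemma wmin_eq (x : ℕ → ℝ) {a b m : ℕ} (h : m ∈ Set.Icc a b)
    (hm : ∀ i, a ≤ i → i ≤ b → x m ≤ x i) : wmin x a b = x m :=
  le_antisymm (wmin_le x h) (le_wmin x (h.1.trans h.2) hm)

lemma wmin_shift (x : ℕ → ℝ) (s a b : ℕ) :
    wmin (fun i => x (i + s)) a b = wmin x (a + s) (b + s) := by
  unfold wmin
  congr 1
  ext y
  constructor
  · rintro ⟨i, ⟨h1, h2⟩, rfl⟩
    exact ⟨i + s, ⟨by omega, by omega⟩, rfl⟩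
  · rintro ⟨j, ⟨h1, h2⟩, rfl⟩
    refine ⟨j - s, ⟨by omega, by omega⟩, ?_⟩
    simp only []
    congr 1
    omega

lemma neg_one_pow_sub {a b : ℕ} (h : a ≤ b) : (-1 : ℝ) ^ (b - a) = (-1) ^ a * (-1) ^ b := by
  rw [← pow_add]
  have h2 : a + b = (b - a) + 2 * a := by omega
  rw [h2, pow_add, pow_mul]
  norm_num

lemma Hfun_decomp (N m : ℕ) (x : ℕ → ℝ) (hmN : m < N)
    (hmin : ∀ i, i < N → x m ≤ x i) :
    Hfun N x = Hfun m x + Hfun (N - (m+1)) (fun i => x (i + (m+1)))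
      + x m * (2 * ((∑ a ∈ Finset.range (m+1), (-1:ℝ)^a) *
          (∑ b ∈ Finset.Ico m N, (-1:ℝ)^b)) - 1) := by
  have hmN' : m ≤ N := hmN.le
  -- split of the linear sum
  have hs : ∑ a ∈ Finset.range N, x a
      = (∑ a ∈ Finset.range m, x a) + (x m + ∑ a ∈ Finset.Ico (m+1) N, x a) := by
    rw [Finset.range_eq_Ico, ← Finset.sum_Ico_consecutive x (Nat.zero_le m) hmN',
      Finset.sum_eq_sum_Ico_succ_bot hmN, ← Finset.range_eq_Ico]
  -- split of the double sum
  have hd : ∑ a ∈ Finset.range N, ∑ b ∈ Finset.Ico (a+1) N, (-1:ℝ)^(b-a) * wmin x a b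
      = (∑ a ∈ Finset.range m, ∑ b ∈ Finset.Ico (a+1) m, (-1:ℝ)^(b-a) * wmin x a b)
      + ((∑ a ∈ Finset.range m, ∑ b ∈ Finset.Ico m N, (-1:ℝ)^(b-a) * wmin x a b)
        + ∑ b ∈ Finset.Ico (m+1) N, (-1:ℝ)^(b-m) * wmin x m b)
      + (∑ a ∈ Finset.Ico (m+1) N, ∑ b ∈ Finset.Ico (a+1) N, (-1:ℝ)^(b-a) * wmin x a b) := by
    rw [Finset.range_eq_Ico, ← Finset.sum_Ico_consecutive _ (Nat.zero_le m) hmN',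
      Finset.sum_eq_sum_Ico_succ_bot hmN, ← Finset.range_eq_Ico]
    have hsplit : ∀ a ∈ Finset.range m,
        ∑ b ∈ Finset.Ico (a+1) N, (-1:ℝ)^(b-a) * wmin x a b
        = ∑ b ∈ Finset.Ico (a+1) m, (-1:ℝ)^(b-a) * wmin x a b
          + ∑ b ∈ Finset.Ico m N, (-1:ℝ)^(b-a) * wmin x a b := by
      intro a ha
      have ham := Finset.mem_range.1 ha
      rw [Finset.sum_Ico_consecutive _ (by omega : a + 1 ≤ m) hmN']
    rw [Finset.sum_congr rfl hsplit, Finset.sum_add_distrib]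
    ring
  -- evaluation of windows containing m
  have key : ∀ a b, a ≤ m → m ≤ b → b < N →
      (-1:ℝ)^(b-a) * wmin x a b = ((-1:ℝ)^a * (-1)^b) * x m := by
    intro a b ham hmb hbN
    rw [wmin_eq x ⟨ham, hmb⟩ (fun i h1 h2 => hmin i (by omega)),
      neg_one_pow_sub (ham.trans hmb)]
  have hT : (∑ a ∈ Finset.range m, ∑ b ∈ Finset.Ico m N, (-1:ℝ)^(b-a) * wmin x a b)
        + ∑ b ∈ Finset.Ico (m+1) N, (-1:ℝ)^(b-m) * wmin x m b
      = x m * ((∑ a ∈ Finset.range (m+1), (-1:ℝ)^a) *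
          (∑ b ∈ Finset.Ico m N, (-1:ℝ)^b) - 1) := by
    rw [Finset.sum_congr rfl (fun a ha => Finset.sum_congr rfl
      (fun b hb => key a b (Finset.mem_range.1 ha).le (Finset.mem_Ico.1 hb).1
        (Finset.mem_Ico.1 hb).2))]
    rw [Finset.sum_congr rfl (fun b hb => key m b le_rfl
      (by have := (Finset.mem_Ico.1 hb).1; omega) (Finset.mem_Ico.1 hb).2)]
    have t1 : ∑ a ∈ Finset.range m, ∑ b ∈ Finset.Ico m N, ((-1:ℝ)^a * (-1)^b) * x m
        = (∑ a ∈ Finset.range m, (-1:ℝ)^a) * (∑ b ∈ Finset.Ico m N, (-1:ℝ)^b) * x m := by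
      rw [Finset.sum_mul_sum]
      simp only [Finset.sum_mul]
    have t2 : ∑ b ∈ Finset.Ico (m+1) N, ((-1:ℝ)^m * (-1)^b) * x m
        = (-1:ℝ)^m * (∑ b ∈ Finset.Ico (m+1) N, (-1:ℝ)^b) * x m := by
      simp only [Finset.mul_sum, Finset.sum_mul]
    rw [t1, t2, Finset.sum_range_succ,
      Finset.sum_eq_sum_Ico_succ_bot hmN (fun b => (-1:ℝ)^b)]
    have he : (-1:ℝ)^m * (-1:ℝ)^m = 1 := by
      rw [← pow_add, ← two_mul, pow_mul]; norm_num
    linear_combination -(x m) * he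
  -- reindexing the right block
  have hR1 : ∑ a ∈ Finset.Ico (m+1) N, x a
      = ∑ a ∈ Finset.range (N - (m+1)), x (a + (m+1)) := by
    rw [Finset.sum_Ico_eq_sum_range]
    exact Finset.sum_congr rfl (fun i _ => by congr 1; omega)
  have hR2 : ∑ a ∈ Finset.Ico (m+1) N, ∑ b ∈ Finset.Ico (a+1) N, (-1:ℝ)^(b-a) * wmin x a b
      = ∑ a ∈ Finset.range (N - (m+1)), ∑ b ∈ Finset.Ico (a+1) (N - (m+1)),
          (-1:ℝ)^(b-a) * wmin (fun i => x (i + (m+1))) a b := by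
    rw [Finset.sum_Ico_eq_sum_range]
    apply Finset.sum_congr rfl
    intro i _
    rw [Finset.sum_Ico_eq_sum_range, Finset.sum_Ico_eq_sum_range]
    have hc : N - (m + 1 + i + 1) = N - (m+1) - (i + 1) := by omega
    rw [hc]
    apply Finset.sum_congr rfl
    intro j _
    rw [wmin_shift x (m+1)]
    congr 1
    · congr 1
      omega
    · congr 1 <;> omega
  unfold Hfun
  rw [hs, hd, hT, hR1, hR2]
  ring
lemma sum_neg_one_pow (n : ℕ) :
    ∑ i ∈ Finset.range n, (-1 : ℝ) ^ i = if Even n then 0 else 1 := by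
  induction n with
  | zero => simp
  | succ k ih =>
    rw [Finset.sum_range_succ, ih]
    by_cases h : Even k
    · simp [h, Nat.even_add_one, h.neg_one_pow]
    · simp [h, Nat.even_add_one, (Nat.not_even_iff_odd.1 h).neg_one_pow]

lemma Hfun_main (N : ℕ) : ∀ x : ℕ → ℝ,
    (Even N → 0 ≤ Hfun N x) ∧ (Odd N → wmin x 0 (N-1) ≤ Hfun N x) := by
  induction N using Nat.strong_induction_on with
  | _ N ih =>
  intro x
  rcases Nat.eq_zero_or_pos N with rfl | hN
  · refine ⟨fun _ => by simp [Hfun], fun h => absurd h (by simp)⟩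
  obtain ⟨m, hmmem, hmin⟩ := Finset.exists_min_image (Finset.range N) x
    ⟨0, Finset.mem_range.2 hN⟩
  have hmN : m < N := Finset.mem_range.1 hmmem
  have hmin' : ∀ i, i < N → x m ≤ x i := fun i hi => hmin i (Finset.mem_range.2 hi)
  have hdec := Hfun_decomp N m x hmN hmin'
  set R := N - (m+1) with hRdef
  set x' : ℕ → ℝ := fun i => x (i + (m+1)) with hx'
  have hwlow : wmin x 0 (N-1) ≤ x m := wmin_le x ⟨Nat.zero_le _, by omega⟩
  have hA := sum_neg_one_pow (m+1)
  have hB : ∑ b ∈ Finset.Ico m N, (-1:ℝ)^b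
      = (if Even N then 0 else 1) - (if Even m then 0 else 1) := by
    rw [Finset.sum_Ico_eq_sub _ hmN.le, sum_neg_one_pow, sum_neg_one_pow]
  have ihL := ih m hmN x
  have ihR := ih R (by omega) x'
  have hLlow : x m ≤ wmin x 0 (m-1) :=
    le_wmin x (Nat.zero_le _) (fun i _ hi => hmin' i (by omega))
  have hRlow : 1 ≤ R → x m ≤ wmin x' 0 (R-1) := fun h1 =>
    le_wmin x' (Nat.zero_le _) (fun i _ hi => hmin' (i + (m+1)) (by omega))
  constructor
  · intro hNe
    have hNe' := Nat.even_iff.1 hNe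
    rw [hdec]
    rcases Nat.even_or_odd m with hm | hm
    · have hBz : (∑ b ∈ Finset.Ico m N, (-1:ℝ)^b) = 0 := by
        rw [hB]; simp [hNe, hm]
      have hRodd : Odd R := by
        rw [Nat.odd_iff]; have := Nat.even_iff.1 hm; omega
      have h1 := ihL.1 hm
      have h2 := ihR.2 hRodd
      have h3 := hRlow (by have := Nat.odd_iff.1 hRodd; omega)
      rw [hBz]
      have : x m * (2 * ((∑ a ∈ Finset.range (m+1), (-1:ℝ)^a) * 0) - 1) = -(x m) := by
        ring
      rw [this]
      linarith
    · have hAz : (∑ a ∈ Finset.range (m+1), (-1:ℝ)^a) = 0 := by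
        rw [hA]; simp [Nat.even_add_one, Nat.not_even_iff_odd.2 hm]
      have hReven : Even R := by
        rw [Nat.even_iff]; have := Nat.odd_iff.1 hm; omega
      have h1 := ihL.2 hm
      have h2 := ihR.1 hReven
      rw [hAz]
      have : x m * (2 * (0 * ∑ b ∈ Finset.Ico m N, (-1:ℝ)^b) - 1) = -(x m) := by
        ring
      rw [this]
      linarith
  · intro hNo
    have hNo' := Nat.odd_iff.1 hNo
    rw [hdec]
    rcases Nat.even_or_odd m with hm | hm
    · have hA1 : (∑ a ∈ Finset.range (m+1), (-1:ℝ)^a) = 1 := by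
        rw [hA]; simp [Nat.even_add_one, hm]
      have hB1 : (∑ b ∈ Finset.Ico m N, (-1:ℝ)^b) = 1 := by
        rw [hB]; simp [Nat.not_even_iff_odd.2 hNo, hm]
      have hReven : Even R := by
        rw [Nat.even_iff]; have := Nat.even_iff.1 hm; omega
      have h1 := ihL.1 hm
      have h2 := ihR.1 hReven
      rw [hA1, hB1]
      have : x m * (2 * ((1:ℝ) * 1) - 1) = x m := by ring
      rw [this]
      linarith
    · have hAz : (∑ a ∈ Finset.range (m+1), (-1:ℝ)^a) = 0 := by
        rw [hA]; simp [Nat.even_add_one, Nat.not_even_iff_odd.2 hm]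
      have hRodd : Odd R := by
        rw [Nat.odd_iff]; have := Nat.odd_iff.1 hm; omega
      have h1 := ihL.2 hm
      have h2 := ihR.2 hRodd
      have h3 := hRlow (by have := Nat.odd_iff.1 hRodd; omega)
      rw [hAz]
      have : x m * (2 * (0 * ∑ b ∈ Finset.Ico m N, (-1:ℝ)^b) - 1) = -(x m) := by
        ring
      rw [this]
      linarith

/-- For even `n ≥ 4` and any reals `x_0, …, x_{n-3}`, the function `H` satisfies `H(x) ≥ 0`. -/
theorem Hfun_nonneg (n : ℕ) (hn : 4 ≤ n) (he : Even n) (x : ℕ → ℝ) :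
    0 ≤ Hfun (n - 2) x := by
  apply (Hfun_main (n - 2) x).1
  rw [Nat.even_iff] at he ⊢
  omega
end

section
/- For n even, H(x) = 0 if and only if there exists a non-crossing chord diagram C on n−2 points (labeled 3,…,n) such that: (i) for every chord θ_{ab} of C, x_{a−3} = x_{b−3}; and (ii) whenever a chord θ_{ab} surrounds another chord θ_{cd}, then x_{a−3} = x_{b−3} < x_{c−3} = x_{d−3}. Here H(x) = Σ_{a=0}^{n−3} x_a + 2·Σ_{a=0}^{n−4} Σ_{b=a+1}^{n−3} (−1)^{b−a}·min(x_a,…,x_b). -/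
/-- A non-crossing perfect matching (non-crossing chord diagram) of the `N` points
`0, 1, …, N-1` on a line: chords are ordered pairs `(a, b)` with `a < b < N`, every
point `i < N` is the endpoint of exactly one chord, and no two chords interleave
as `a < c < b < d`. -/
def IsNCMatchingN (N : ℕ) (M : Finset (ℕ × ℕ)) : Prop :=
  (∀ p ∈ M, p.1 < p.2 ∧ p.2 < N) ∧
  (∀ i < N, ∃! p : ℕ × ℕ, p ∈ M ∧ (p.1 = i ∨ p.2 = i)) ∧
  (∀ p ∈ M, ∀ q ∈ M, ¬(p.1 < q.1 ∧ q.1 < p.2 ∧ p.2 < q.2))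

open Finset

noncomputable def Gfun (x : ℕ → ℝ) (a b : ℕ) : ℝ :=
  (∑ i ∈ Ico a b, x i) + 2 * ∑ i ∈ Ico a b, ∑ j ∈ Ico (i + 1) b, (-1 : ℝ) ^ (j - i) * wmin x i j

section Gfun

variable {x : ℕ → ℝ} {a b z : ℕ}

theorem Hfun_eq_Gfun (N : ℕ) (x : ℕ → ℝ) : Hfun N x = Gfun x 0 N := by
  rw [Hfun, Gfun, range_eq_Ico]

theorem Gfun_of_le (h : b ≤ a) : Gfun x a b = 0 := by
  simp [Gfun, Ico_eq_empty_of_le h]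

theorem wmin_eq_of_le {i j : ℕ} (hiz : i ≤ z) (hzj : z ≤ j)
    (hmin : ∀ k, i ≤ k → k ≤ j → x z ≤ x k) : wmin x i j = x z :=
  IsLeast.csInf_eq ⟨⟨z, ⟨hiz, hzj⟩, rfl⟩, by rintro _ ⟨k, ⟨hik, hkj⟩, rfl⟩; exact hmin k hik hkj⟩

theorem sum_Ico_sum_Ico_succ_split {M : Type*} [AddCommMonoid M] (f : ℕ → ℕ → M)
    (haz : a ≤ z) (hzb : z ≤ b) :
    ∑ i ∈ Ico a b, ∑ j ∈ Ico (i + 1) b, f i j =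
      ∑ i ∈ Ico a z, ∑ j ∈ Ico (i + 1) z, f i j + ∑ i ∈ Ico a z, ∑ j ∈ Ico z b, f i j +
        ∑ i ∈ Ico z b, ∑ j ∈ Ico (i + 1) b, f i j := by
  rw [← sum_Ico_consecutive _ haz hzb, ← sum_add_distrib]
  congr 1
  refine sum_congr rfl fun i hi => ?_
  rw [sum_Ico_consecutive _ (by simp only [mem_Ico] at hi; omega) hzb]

theorem sum_Ico_neg_one_pow_sub_left (haz : a ≤ z) :
    ∑ i ∈ Ico a (z + 1), (-1 : ℝ) ^ (z - i) = if Even (z - a) then 1 else 0 := by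
  rw [sum_Ico_reflect _ _ le_rfl, Nat.sub_self, ← range_eq_Ico,
    show z + 1 - a = z - a + 1 by omega, neg_one_geom_sum]
  simp [Nat.even_add_one, -Nat.not_even_iff_odd]

theorem sum_Ico_neg_one_pow_sub_right (hzb : z < b) :
    ∑ j ∈ Ico z b, (-1 : ℝ) ^ (j - z) = if Even (b - (z + 1)) then 1 else 0 := by
  rw [sum_Ico_eq_sum_range]
  simp only [add_tsub_cancel_left]
  rw [show b - z = b - (z + 1) + 1 by omega, neg_one_geom_sum]
  simp [Nat.even_add_one, -Nat.not_even_iff_odd]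

/-- The total coefficient of `x_z` in `Gfun x a b` coming from windows that contain `z`. -/
theorem split_coeff (haz : a ≤ z) (hzb : z < b) :
    1 + 2 * (∑ i ∈ Ico a z, ∑ j ∈ Ico z b, (-1 : ℝ) ^ (j - i) +
        ∑ j ∈ Ico (z + 1) b, (-1 : ℝ) ^ (j - z)) =
      if Even (z - a) ∧ Even (b - (z + 1)) then 1 else -1 := by
  have hcross : ∑ i ∈ Ico a z, ∑ j ∈ Ico z b, (-1 : ℝ) ^ (j - i) =
      (∑ i ∈ Ico a z, (-1 : ℝ) ^ (z - i)) * ∑ j ∈ Ico z b, (-1 : ℝ) ^ (j - z) := by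
    rw [sum_mul_sum]
    refine sum_congr rfl fun i hi => sum_congr rfl fun j hj => ?_
    rw [← pow_add]
    congr 1
    simp only [mem_Ico] at hi hj
    omega
  have hl := sum_Ico_neg_one_pow_sub_left haz
  have hr := sum_Ico_neg_one_pow_sub_right hzb
  rw [sum_Ico_succ_top haz, Nat.sub_self, pow_zero] at hl
  rw [sum_eq_sum_Ico_succ_bot hzb, Nat.sub_self, pow_zero] at hr hcross
  rw [hcross, eq_sub_of_add_eq hl, eq_sub_of_add_eq' hr]
  by_cases h₁ : Even (z - a) <;> by_cases h₂ : Even (b - (z + 1)) <;> norm_num [h₁, h₂]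

/-- Every window containing a minimiser `z` has minimum `x z`, so `Gfun` splits at `z`. -/
theorem Gfun_split (haz : a ≤ z) (hzb : z < b) (hmin : ∀ i, a ≤ i → i < b → x z ≤ x i) :
    Gfun x a b = Gfun x a z + Gfun x (z + 1) b +
      (if Even (z - a) ∧ Even (b - (z + 1)) then 1 else -1) * x z := by
  have hw : ∀ i j, a ≤ i → i ≤ z → z ≤ j → j < b → wmin x i j = x z := fun i j hai hiz hzj hjb =>
    wmin_eq_of_le hiz hzj fun k hik hkj => hmin k (by omega) (by omega)
  have hcross : ∑ i ∈ Ico a z, ∑ j ∈ Ico z b, (-1 : ℝ) ^ (j - i) * wmin x i j =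
      (∑ i ∈ Ico a z, ∑ j ∈ Ico z b, (-1 : ℝ) ^ (j - i)) * x z := by
    simp only [sum_mul]
    refine sum_congr rfl fun i hi => sum_congr rfl fun j hj => ?_
    simp only [mem_Ico] at hi hj
    rw [hw i j hi.1 hi.2.le hj.1 hj.2]
  have hrow : ∑ j ∈ Ico (z + 1) b, (-1 : ℝ) ^ (j - z) * wmin x z j =
      (∑ j ∈ Ico (z + 1) b, (-1 : ℝ) ^ (j - z)) * x z := by
    rw [sum_mul]
    refine sum_congr rfl fun j hj => ?_
    simp only [mem_Ico] at hj
    rw [hw z j haz le_rfl (by omega) hj.2]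
  rw [← split_coeff haz hzb, Gfun, Gfun, Gfun, sum_Ico_sum_Ico_succ_split _ haz hzb.le,
    sum_eq_sum_Ico_succ_bot hzb (fun i => ∑ j ∈ Ico (i + 1) b, _), hcross, hrow,
    ← sum_Ico_consecutive _ haz hzb.le, sum_eq_sum_Ico_succ_bot hzb]
  ring

end Gfun

structure IsRightmostMin (x : ℕ → ℝ) (a b z : ℕ) : Prop where
  le : a ≤ z
  lt : z < b
  min_le : ∀ i, a ≤ i → i < b → x z ≤ x i
  lt_of_lt : ∀ i, z < i → i < b → x z < x i

theorem exists_isRightmostMin (x : ℕ → ℝ) {a b : ℕ} (hab : a < b) :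
    ∃ z, IsRightmostMin x a b z := by
  induction b, hab using Nat.le_induction with
  | base => exact ⟨a, le_rfl, lt_add_one a, fun i hai hia => by rw [show i = a by omega],
      fun i hai hia => by omega⟩
  | succ b hab ih =>
    obtain ⟨z, hz⟩ := ih
    by_cases hb : x b ≤ x z
    · refine ⟨b, by omega, lt_add_one b, fun i hai hib => ?_, fun i hbi hib => by omega⟩
      rcases Nat.lt_succ_iff_lt_or_eq.1 hib with hib | rfl
      exacts [hb.trans (hz.min_le i hai hib), le_rfl]
    · push Not at hb
      refine ⟨z, hz.le, hz.lt.trans (lt_add_one b), fun i hai hib => ?_, fun i hzi hib => ?_⟩ <;>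
        rcases Nat.lt_succ_iff_lt_or_eq.1 hib with hib | rfl
      exacts [hz.min_le i hai hib, hb.le, hz.lt_of_lt i hzi hib, hb]

/-- Conditions (i) and (ii) for a non-crossing perfect matching of the points `a, …, b - 1`. -/
structure IsAdmissibleDiagram (x : ℕ → ℝ) (a b : ℕ) (M : Finset (ℕ × ℕ)) : Prop where
  bounds : ∀ p ∈ M, a ≤ p.1 ∧ p.1 < p.2 ∧ p.2 < b
  exists_mem : ∀ i, a ≤ i → i < b → ∃ p ∈ M, p.1 = i ∨ p.2 = i
  unique : ∀ p ∈ M, ∀ q ∈ M, ∀ i, (p.1 = i ∨ p.2 = i) → (q.1 = i ∨ q.2 = i) → p = q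
  not_crossing : ∀ p ∈ M, ∀ q ∈ M, ¬(p.1 < q.1 ∧ q.1 < p.2 ∧ p.2 < q.2)
  eq : ∀ p ∈ M, x p.1 = x p.2
  lt_of_nested : ∀ p ∈ M, ∀ q ∈ M, p.1 < q.1 → q.2 < p.2 → x p.1 < x q.1

theorem isAdmissibleDiagram_zero_iff {x : ℕ → ℝ} {N : ℕ} {M : Finset (ℕ × ℕ)} :
    IsAdmissibleDiagram x 0 N M ↔ IsNCMatchingN N M ∧ (∀ p ∈ M, x p.1 = x p.2) ∧
      ∀ p ∈ M, ∀ q ∈ M, p.1 < q.1 → q.2 < p.2 → x p.1 < x q.1 := by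
  constructor
  · intro h
    refine ⟨⟨fun p hp => (h.bounds p hp).2, fun i hi => ?_, h.not_crossing⟩, h.eq, h.lt_of_nested⟩
    obtain ⟨p, hp, hpi⟩ := h.exists_mem i i.zero_le hi
    exact ⟨p, ⟨hp, hpi⟩, fun q hq => h.unique q hq.1 p hp i hq.2 hpi⟩
  · rintro ⟨⟨hbounds, hunique, hcross⟩, heq, hnested⟩
    refine ⟨fun p hp => ⟨p.1.zero_le, hbounds p hp⟩, fun i _ hi => ?_,
      fun p hp q hq i hpi hqi => ?_, hcross, heq, hnested⟩
    · obtain ⟨p, ⟨hp, hpi⟩, -⟩ := hunique i hi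
      exact ⟨p, hp, hpi⟩
    · have hiN : i < N := by have := hbounds p hp; omega
      exact (hunique i hiN).unique ⟨hp, hpi⟩ ⟨hq, hqi⟩

namespace IsAdmissibleDiagram

variable {x : ℕ → ℝ} {a b c w z : ℕ} {M M₁ M₂ : Finset (ℕ × ℕ)}

theorem empty (h : b ≤ a) : IsAdmissibleDiagram x a b ∅ :=
  ⟨by simp, fun i hai hib => by omega, by simp, by simp, by simp, by simp⟩

theorem union (h₁ : IsAdmissibleDiagram x a c M₁) (h₂ : IsAdmissibleDiagram x c b M₂)
    (hac : a ≤ c) (hcb : c ≤ b) : IsAdmissibleDiagram x a b (M₁ ∪ M₂) := by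
  have sep : ∀ p ∈ M₁, ∀ q ∈ M₂, p.1 < p.2 ∧ p.2 < q.1 ∧ q.1 < q.2 := fun p hp q hq => by
    have := h₁.bounds p hp; have := h₂.bounds q hq; omega
  refine ⟨?_, fun i hai hib => ?_, ?_, ?_, ?_, ?_⟩ <;> simp only [mem_union]
  · rintro p (hp | hp)
    · have := h₁.bounds p hp; omega
    · have := h₂.bounds p hp; omega
  · rcases lt_or_ge i c with hic | hic
    · obtain ⟨p, hp, hpi⟩ := h₁.exists_mem i hai hic
      exact ⟨p, Or.inl hp, hpi⟩
    · obtain ⟨p, hp, hpi⟩ := h₂.exists_mem i hic hib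
      exact ⟨p, Or.inr hp, hpi⟩
  · rintro p (hp | hp) q (hq | hq) i hpi hqi
    · exact h₁.unique p hp q hq i hpi hqi
    · have := sep p hp q hq; omega
    · have := sep q hq p hp; omega
    · exact h₂.unique p hp q hq i hpi hqi
  · rintro p (hp | hp) q (hq | hq)
    · exact h₁.not_crossing p hp q hq
    · have := sep p hp q hq; omega
    · have := sep q hq p hp; omega
    · exact h₂.not_crossing p hp q hq
  · rintro p (hp | hp)
    exacts [h₁.eq p hp, h₂.eq p hp]
  · rintro p (hp | hp) q (hq | hq) h₁₂ h₂₁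
    · exact h₁.lt_of_nested p hp q hq h₁₂ h₂₁
    · have := sep p hp q hq; omega
    · have := sep q hq p hp; omega
    · exact h₂.lt_of_nested p hp q hq h₁₂ h₂₁

theorem insert_chord (h : IsAdmissibleDiagram x (w + 1) z M) (hwz : w < z) (heq : x w = x z)
    (hlt : ∀ i, w < i → i < z → x w < x i) :
    IsAdmissibleDiagram x w (z + 1) (insert (w, z) M) := by
  refine ⟨?_, fun i hwi hiz => ?_, ?_, ?_, ?_, ?_⟩ <;> simp only [mem_insert]
  · rintro p (rfl | hp)
    · exact ⟨le_rfl, hwz, lt_add_one z⟩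
    · have := h.bounds p hp; omega
  · by_cases hi : i = w ∨ i = z
    · exact ⟨(w, z), Or.inl rfl, hi.imp Eq.symm Eq.symm⟩
    · obtain ⟨p, hp, hpi⟩ := h.exists_mem i (by omega) (by omega)
      exact ⟨p, Or.inr hp, hpi⟩
  · rintro p (rfl | hp) q (rfl | hq) i hpi hqi
    · rfl
    · have := h.bounds q hq; omega
    · have := h.bounds p hp; omega
    · exact h.unique p hp q hq i hpi hqi
  · rintro p (rfl | hp) q (rfl | hq)
    · omega
    · have := h.bounds q hq; omega
    · have := h.bounds p hp; omega
    · exact h.not_crossing p hp q hq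
  · rintro p (rfl | hp)
    exacts [heq, h.eq p hp]
  · rintro p (rfl | hp) q (rfl | hq) h₁₂ h₂₁
    · omega
    · exact hlt q.1 h₁₂ (by have := h.bounds q hq; omega)
    · have := h.bounds p hp; omega
    · exact h.lt_of_nested p hp q hq h₁₂ h₂₁

theorem restrict {a' b' : ℕ} {M' : Finset (ℕ × ℕ)} (h : IsAdmissibleDiagram x a b M)
    (hsub : M' ⊆ M) (ha : a ≤ a') (hb : b' ≤ b) (hbounds : ∀ p ∈ M', a' ≤ p.1 ∧ p.2 < b')
    (hmem : ∀ p ∈ M, ∀ i, a' ≤ i → i < b' → (p.1 = i ∨ p.2 = i) → p ∈ M') :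
    IsAdmissibleDiagram x a' b' M' where
  bounds p hp := ⟨(hbounds p hp).1, (h.bounds p (hsub hp)).2.1, (hbounds p hp).2⟩
  exists_mem i hai hib := by
    obtain ⟨p, hp, hpi⟩ := h.exists_mem i (ha.trans hai) (hib.trans_le hb)
    exact ⟨p, hmem p hp i hai hib hpi, hpi⟩
  unique p hp q hq := h.unique p (hsub hp) q (hsub hq)
  not_crossing p hp q hq := h.not_crossing p (hsub hp) q (hsub hq)
  eq p hp := h.eq p (hsub hp)
  lt_of_nested p hp q hq := h.lt_of_nested p (hsub hp) q (hsub hq)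

theorem restrict_lt (h : IsAdmissibleDiagram x a b M) (hcut : ∀ p ∈ M, p.1 < c → p.2 < c)
    (hcb : c ≤ b) :
    IsAdmissibleDiagram x a c (M.filter (·.2 < c)) :=
  h.restrict (filter_subset _ _) le_rfl hcb
    (fun p hp => ⟨(h.bounds p (mem_filter.1 hp).1).1, (mem_filter.1 hp).2⟩)
    fun p hp i _ hic hpi => mem_filter.2 ⟨hp, hcut p hp (by have := h.bounds p hp; omega)⟩

theorem restrict_ge (h : IsAdmissibleDiagram x a b M) (hcut : ∀ p ∈ M, p.1 < c → p.2 < c)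
    (hac : a ≤ c) :
    IsAdmissibleDiagram x c b (M.filter (c ≤ ·.1)) :=
  h.restrict (filter_subset _ _) hac le_rfl
    (fun p hp => ⟨(mem_filter.1 hp).2, (h.bounds p (mem_filter.1 hp).1).2.2⟩)
    fun p hp i hci _ hpi => mem_filter.2 ⟨hp, by
      by_contra! hpc
      have := hcut p hp hpc; have := h.bounds p hp; omega⟩

theorem erase_chord (h : IsAdmissibleDiagram x w (z + 1) M) (hp : (w, z) ∈ M) :
    IsAdmissibleDiagram x (w + 1) z (M.erase (w, z)) := by
  have hwz := (h.bounds _ hp).2.1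
  refine h.restrict (erase_subset _ _) (Nat.le_succ w) (Nat.le_succ z) (fun q hq => ?_)
    fun q hq i hwi hiz hqi => mem_erase.2 ⟨fun hqp => by subst hqp; omega, hq⟩
  obtain ⟨hqp, hq⟩ := mem_erase.1 hq
  have := h.bounds q hq
  have hw : q.1 ≠ w := fun hqw => hqp (h.unique q hq _ hp w (Or.inl hqw) (Or.inl rfl))
  have hz : q.2 ≠ z := fun hqz => hqp (h.unique q hq _ hp z (Or.inr hqz) (Or.inr rfl))
  omega

/-- The rightmost minimiser `z` is the right end of a chord `(w, z)` that no chord surrounds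
(by condition (ii)) or crosses, so the diagram falls apart into diagrams on `[a, w)`,
`(w, z)` and `(z, b)`. -/
theorem exists_decomposition (h : IsAdmissibleDiagram x a b M) (hz : IsRightmostMin x a b z) :
    ∃ w, a ≤ w ∧ w < z ∧ x w = x z ∧ (∃ M₁, IsAdmissibleDiagram x a w M₁) ∧
      (∃ M₂, IsAdmissibleDiagram x (w + 1) z M₂) ∧ ∃ M₃, IsAdmissibleDiagram x (z + 1) b M₃ := by
  obtain ⟨p, hp, hpz⟩ := h.exists_mem z hz.le hz.lt
  have hpz : p.2 = z := hpz.resolve_left fun hp1 => by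
    have := h.bounds p hp
    exact (hz.lt_of_lt p.2 (by omega) this.2.2).ne (hp1 ▸ h.eq p hp)
  obtain ⟨w, hp⟩ : ∃ w, (w, z) ∈ M := ⟨p.1, hpz ▸ hp⟩
  have hb := h.bounds _ hp
  have hxw := h.eq _ hp
  simp only at hb hxw
  have touch : ∀ q ∈ M, q.1 = w ∨ q.2 = w ∨ q.1 = z ∨ q.2 = z → q = (w, z) := by
    rintro q hq (h' | h' | h' | h')
    exacts [h.unique q hq _ hp w (Or.inl h') (Or.inl rfl),
      h.unique q hq _ hp w (Or.inr h') (Or.inl rfl),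
      h.unique q hq _ hp z (Or.inl h') (Or.inr rfl),
      h.unique q hq _ hp z (Or.inr h') (Or.inr rfl)]
  have not_surround : ∀ q ∈ M, q.1 < w → z < q.2 → False := fun q hq h₁ h₂ => by
    have hlt : x q.1 < x w := h.lt_of_nested q hq _ hp h₁ h₂
    have := hz.min_le q.1 (h.bounds q hq).1 (by have := h.bounds q hq; omega)
    linarith
  have cut : ∀ q ∈ M, ∀ c, (c = w ∨ c = z + 1) → q.1 < c → q.2 < c := by
    intro q hq c hc h₁
    by_contra! h₂
    have hq_ne : q ≠ (w, z) := by rintro rfl; omega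
    have : ¬(q.1 = w ∨ q.2 = w ∨ q.1 = z ∨ q.2 = z) := fun h' => hq_ne (touch q hq h')
    have : ¬(q.1 < w ∧ z < q.2) := fun h' => not_surround q hq h'.1 h'.2
    have : ¬(q.1 < w ∧ w < q.2 ∧ q.2 < z) := h.not_crossing q hq _ hp
    have : ¬(w < q.1 ∧ q.1 < z ∧ z < q.2) := h.not_crossing _ hp q hq
    have := h.bounds q hq
    omega
  have hL := h.restrict_lt (cut · · w (Or.inl rfl)) (by omega)
  have hR := h.restrict_ge (cut · · w (Or.inl rfl)) hb.1
  have hRcut : ∀ q ∈ M.filter (w ≤ ·.1), q.1 < z + 1 → q.2 < z + 1 :=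
    fun q hq => cut q (mem_filter.1 hq).1 _ (Or.inr rfl)
  have hMid := hR.restrict_lt hRcut (by omega)
  have hInner := hMid.erase_chord (by simp [hp])
  exact ⟨w, hb.1, hb.2.1, hxw, ⟨_, hL⟩, ⟨_, hInner⟩, ⟨_, hR.restrict_ge hRcut (by omega)⟩⟩

theorem even_and_Gfun_eq_zero (h : IsAdmissibleDiagram x a b M) :
    Even (b - a) ∧ Gfun x a b = 0 := by
  induction hL : b - a using Nat.strong_induction_on generalizing a b M with
  | _ L ih =>
  rcases le_or_gt b a with hba | hab
  · exact ⟨by rw [← hL, Nat.sub_eq_zero_of_le hba]; exact Even.zero, Gfun_of_le hba⟩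
  obtain ⟨z, hz⟩ := exists_isRightmostMin x hab
  obtain ⟨w, haw, hwz, hxw, ⟨M₁, h₁⟩, ⟨M₂, h₂⟩, ⟨M₃, h₃⟩⟩ := h.exists_decomposition hz
  have := hz.lt
  obtain ⟨e₁, g₁⟩ := ih _ (by omega) h₁ rfl
  obtain ⟨e₂, g₂⟩ := ih _ (by omega) h₂ rfl
  obtain ⟨e₃, g₃⟩ := ih _ (by omega) h₃ rfl
  have hodd : ¬Even (b - (w + 1)) := by rw [Nat.even_iff] at e₂ e₃ ⊢; omega
  refine ⟨by rw [← hL, Nat.even_iff]; rw [Nat.even_iff] at e₁ e₂ e₃; omega, ?_⟩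
  -- split first at `w`, then at `z`; the two boundary terms cancel since `x w = x z`
  rw [Gfun_split haw (hwz.trans hz.lt) (fun i hai hib => hxw ▸ hz.min_le i hai hib),
    if_neg fun h => hodd h.2,
    Gfun_split (a := w + 1) hwz hz.lt (fun i _ hib => hz.min_le i (by omega) hib),
    if_pos ⟨e₂, e₃⟩, g₁, g₂, g₃, hxw]
  ring

end IsAdmissibleDiagram

section Bounds

variable {x : ℕ → ℝ} {a b z w z' : ℕ}

def GfunEvenBound (x : ℕ → ℝ) (a b : ℕ) : Prop :=
  0 ≤ Gfun x a b ∧ (Gfun x a b = 0 → ∃ M, IsAdmissibleDiagram x a b M)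

def GfunOddBound (x : ℕ → ℝ) (a b z : ℕ) : Prop :=
  x z ≤ Gfun x a b ∧
    (Gfun x a b = x z → (∃ M, IsAdmissibleDiagram x a z M) ∧ ∃ M, IsAdmissibleDiagram x (z + 1) b M)

theorem Gfun_split_rightmostMin_of_even (hz : IsRightmostMin x a b z) (hl : Even (z - a))
    (hr : Even (b - (z + 1))) : Gfun x a b = Gfun x a z + Gfun x (z + 1) b + x z := by
  rw [Gfun_split hz.le hz.lt hz.min_le, if_pos ⟨hl, hr⟩, one_mul]

theorem Gfun_split_rightmostMin_of_odd (hz : IsRightmostMin x a b z)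
    (hodd : Odd (z - a) ∨ Odd (b - (z + 1))) :
    Gfun x a b = Gfun x a z + Gfun x (z + 1) b - x z := by
  rw [Gfun_split hz.le hz.lt hz.min_le, if_neg, neg_one_mul, ← sub_eq_add_neg]
  rintro ⟨hl, hr⟩
  rcases hodd with h | h
  exacts [Nat.not_even_iff_odd.2 h hl, Nat.not_even_iff_odd.2 h hr]

theorem GfunOddBound.of_even_even (hz : IsRightmostMin x a b z) (hl : Even (z - a))
    (hr : Even (b - (z + 1))) (hL : GfunEvenBound x a z) (hR : GfunEvenBound x (z + 1) b) :
    GfunOddBound x a b z := by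
  rw [GfunOddBound, Gfun_split_rightmostMin_of_even hz hl hr]
  obtain ⟨hL₀, hL⟩ := hL
  obtain ⟨hR₀, hR⟩ := hR
  exact ⟨by linarith, fun h => ⟨hL (by linarith), hR (by linarith)⟩⟩

theorem Gfun_pos_of_odd_right (hz : IsRightmostMin x a b z) (hr : Odd (b - (z + 1)))
    (hz' : IsRightmostMin x (z + 1) b z') (hL : 0 ≤ Gfun x a z) (hR : GfunOddBound x (z + 1) b z') :
    0 < Gfun x a b := by
  have := hz.lt_of_lt z' (by have := hz'.le; omega) hz'.lt
  rw [Gfun_split_rightmostMin_of_odd hz (Or.inr hr)]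
  linarith [hR.1]

theorem lt_Gfun_of_odd_odd (hz : IsRightmostMin x a b z) (hl : Odd (z - a))
    (hw : IsRightmostMin x a z w) (hz' : IsRightmostMin x (z + 1) b z')
    (hL : GfunOddBound x a z w) (hR : GfunOddBound x (z + 1) b z') : x z < Gfun x a b := by
  have := hz.min_le w hw.le (hw.lt.trans hz.lt)
  have := hz.lt_of_lt z' (by have := hz'.le; omega) hz'.lt
  rw [Gfun_split_rightmostMin_of_odd hz (Or.inl hl)]
  linarith [hL.1, hR.1]

/-- Equality forces `x w = x z` for the rightmost minimiser `w` of the left part, and the chord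
`(w, z)` then closes the diagrams supplied by the left and right parts. -/
theorem GfunEvenBound.of_odd_even (hz : IsRightmostMin x a b z) (hl : Odd (z - a))
    (hw : IsRightmostMin x a z w) (hL : GfunOddBound x a z w) (hR : GfunEvenBound x (z + 1) b) :
    GfunEvenBound x a b := by
  have hzw := hz.min_le w hw.le (hw.lt.trans hz.lt)
  rw [GfunEvenBound, Gfun_split_rightmostMin_of_odd hz (Or.inl hl)]
  obtain ⟨hL₀, hL⟩ := hL
  obtain ⟨hR₀, hR⟩ := hR
  refine ⟨by linarith, fun h => ?_⟩
  obtain ⟨⟨M₁, h₁⟩, ⟨M₂, h₂⟩⟩ := hL (by linarith)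
  obtain ⟨M₃, h₃⟩ := hR (by linarith)
  have hxw : x w = x z := by linarith
  have := hw.le; have := hw.lt
  exact ⟨_, (h₁.union (h₂.insert_chord hw.lt hxw hw.lt_of_lt) hw.le (by omega)).union h₃
    (by omega) hz.lt⟩

def GfunBounds (x : ℕ → ℝ) (a b : ℕ) : Prop :=
  (Even (b - a) → GfunEvenBound x a b) ∧
    (Odd (b - a) → ∀ z, IsRightmostMin x a b z → GfunOddBound x a b z)

theorem GfunBounds.of_le (h : b ≤ a) : GfunBounds x a b := by
  refine ⟨fun _ => ?_, fun hodd => absurd (Nat.sub_eq_zero_of_le h ▸ hodd) Nat.not_odd_zero⟩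
  rw [GfunEvenBound, Gfun_of_le h]
  exact ⟨le_rfl, fun _ => ⟨∅, .empty h⟩⟩

theorem GfunBounds.step (hz : IsRightmostMin x a b z) (hL : GfunBounds x a z)
    (hR : GfunBounds x (z + 1) b) :
    (Even (b - a) → GfunEvenBound x a b) ∧ (Odd (b - a) → GfunOddBound x a b z) := by
  have := hz.le; have := hz.lt
  have parity : b - a = z - a + (b - (z + 1)) + 1 := by omega
  rw [parity, Nat.even_add_one, Nat.odd_add_one]
  rcases Nat.even_or_odd (z - a) with hl | hl <;> rcases Nat.even_or_odd (b - (z + 1)) with hr | hr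
  · exact ⟨fun hev => absurd (hl.add hr) hev,
      fun _ => GfunOddBound.of_even_even hz hl hr (hL.1 hl) (hR.1 hr)⟩
  · obtain ⟨z', hz'⟩ := exists_isRightmostMin x (show z + 1 < b by rw [Nat.odd_iff] at hr; omega)
    have hpos := Gfun_pos_of_odd_right hz hr hz' (hL.1 hl).1 (hR.2 hr z' hz')
    exact ⟨fun _ => ⟨hpos.le, fun h => absurd h hpos.ne'⟩, fun hodd => absurd (hl.add_odd hr) hodd⟩
  · obtain ⟨w, hw⟩ := exists_isRightmostMin x (show a < z by rw [Nat.odd_iff] at hl; omega)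
    exact ⟨fun _ => GfunEvenBound.of_odd_even hz hl hw (hL.2 hl w hw) (hR.1 hr),
      fun hodd => absurd (hl.add_even hr) hodd⟩
  · obtain ⟨w, hw⟩ := exists_isRightmostMin x (show a < z by rw [Nat.odd_iff] at hl; omega)
    obtain ⟨z', hz'⟩ := exists_isRightmostMin x (show z + 1 < b by rw [Nat.odd_iff] at hr; omega)
    have hlt := lt_Gfun_of_odd_odd hz hl hw hz' (hL.2 hl w hw) (hR.2 hr z' hz')
    exact ⟨fun hev => absurd (hl.add_odd hr) hev, fun _ => ⟨hlt.le, fun h => absurd h hlt.ne'⟩⟩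

theorem gfunBounds (x : ℕ → ℝ) (a b : ℕ) : GfunBounds x a b := by
  induction hL : b - a using Nat.strong_induction_on generalizing a b with
  | _ L ih =>
  rcases le_or_gt b a with hba | hab
  · exact .of_le hba
  have step : ∀ z, IsRightmostMin x a b z → _ := fun z hz =>
    GfunBounds.step hz (ih _ (by have := hz.lt; omega) a z rfl)
      (ih _ (by have := hz.le; omega) (z + 1) b rfl)
  obtain ⟨z, hz⟩ := exists_isRightmostMin x hab
  exact ⟨(step z hz).1, fun hodd z hz => (step z hz).2 hodd⟩

end Bounds

theorem Hfun_eq_zero_iff_ncChordDiagram_general (n : ℕ) (he : Even n) (x : ℕ → ℝ) :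
    Hfun (n - 2) x = 0 ↔
      ∃ M : Finset (ℕ × ℕ), IsNCMatchingN (n - 2) M ∧
        (∀ p ∈ M, x p.1 = x p.2) ∧
        (∀ p ∈ M, ∀ q ∈ M, p.1 < q.1 → q.2 < p.2 → x p.1 < x q.1) := by
  have hN : Even (n - 2) := by
    obtain ⟨k, rfl⟩ := he
    exact ⟨k - 1, by omega⟩
  simp only [Hfun_eq_Gfun, ← isAdmissibleDiagram_zero_iff]
  exact ⟨((gfunBounds x 0 (n - 2)).1 hN).2,
    fun ⟨_, hM⟩ => hM.even_and_Gfun_eq_zero.2⟩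

/-- For even `n`, `H(x) = 0` iff there is a non-crossing chord diagram `C` on the `n - 2`
points (points `3, …, n` of the paper correspond to indices `0, …, n-3` here) such that
(i) `x_{a} = x_{b}` for every chord `{a,b}` of `C`, and (ii) whenever a chord `{a,b}`
surrounds another chord `{c,d}` (i.e. `a < c < d < b`), then `x_a = x_b < x_c = x_d`. -/
theorem Hfun_eq_zero_iff_ncChordDiagram (n : ℕ) (hn : 4 ≤ n) (he : Even n) (x : ℕ → ℝ) :
    Hfun (n - 2) x = 0 ↔
      ∃ M : Finset (ℕ × ℕ), IsNCMatchingN (n - 2) M ∧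
        (∀ p ∈ M, x p.1 = x p.2) ∧
        (∀ p ∈ M, ∀ q ∈ M, p.1 < q.1 → q.2 < p.2 → x p.1 < x q.1) :=
  Hfun_eq_zero_iff_ncChordDiagram_general n he x
end

section
/- For every n even and every sequence x_0,…,x_{n−3} of distinct reals, there exists a non-crossing perfect matching of {0,…,n−3} (a bounding chord diagram) such that: for each matched pair (a,b) with a<b and x_a < x_b, the counts k_b and ℓ_b are both even and ℓ_a is odd; while if x_a > x_b, then k_a and ℓ_a are both even and k_b is odd. Here k_i is the number of consecutive indices j < i immediately preceding i with x_j > x_i, and ℓ_i the number of consecutive indices j > i immediately following i with x_j > x_i. -/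
open scoped Classical in
/-- `kcnt x i` is `k_i`: the number of consecutive indices immediately preceding `i`
whose values exceed `x i` (the run `x_{i-1}, x_{i-2}, …` of elements `> x i`). -/
noncomputable def kcnt (x : ℕ → ℝ) (i : ℕ) : ℕ :=
  ((Finset.range i).filter (fun m => ∀ t ≤ m, x i < x (i - 1 - t))).card

open scoped Classical in
/-- `lcnt N x i` is `ℓ_i`: the number of consecutive indices immediately following `i`
(within `0, …, N-1`) whose values exceed `x i`. -/
noncomputable def lcnt (N : ℕ) (x : ℕ → ℝ) (i : ℕ) : ℕ :=
  ((Finset.range (N - 1 - i)).filter (fun m => ∀ t ≤ m, x i < x (i + 1 + t))).card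

namespace BCD

/-- The parity conditions that each chord must satisfy. -/
def Good (N : ℕ) (x : ℕ → ℝ) (p : ℕ × ℕ) : Prop :=
  (x p.1 < x p.2 → Even (kcnt x p.2) ∧ Even (lcnt N x p.2) ∧ Odd (lcnt N x p.1)) ∧
  (x p.2 < x p.1 → Even (kcnt x p.1) ∧ Even (lcnt N x p.1) ∧ Odd (kcnt x p.2))

/-- A good partial matching of the interval `[L, R]` leaving the set `E` exposed. -/
def MGood (N : ℕ) (x : ℕ → ℝ) (L R : ℕ) (E : Set ℕ) (M : Finset (ℕ × ℕ)) : Prop :=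
  (∀ p ∈ M, L ≤ p.1 ∧ p.1 < p.2 ∧ p.2 ≤ R ∧ Good N x p) ∧
  (∀ i : ℕ, (L ≤ i ∧ i ≤ R ∧ i ∉ E) ↔ ∃ p ∈ M, p.1 = i ∨ p.2 = i) ∧
  (∀ p ∈ M, ∀ q ∈ M, p ≠ q → p.1 ≠ q.1 ∧ p.1 ≠ q.2 ∧ p.2 ≠ q.1 ∧ p.2 ≠ q.2) ∧
  (∀ p ∈ M, ∀ q ∈ M, ¬(p.1 < q.1 ∧ q.1 < p.2 ∧ p.2 < q.2)) ∧
  (∀ p ∈ M, ∀ i ∈ E, ¬(p.1 < i ∧ i < p.2))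

lemma kcnt_eq (x : ℕ → ℝ) (i r : ℕ) (h1 : r ≤ i)
    (h2 : ∀ t, t < r → x i < x (i - 1 - t))
    (h3 : r = i ∨ ¬ x i < x (i - 1 - r)) : kcnt x i = r := by
  classical
  have hset : ((Finset.range i).filter (fun m => ∀ t ≤ m, x i < x (i - 1 - t)))
      = Finset.range r := by
    ext m
    simp only [Finset.mem_filter, Finset.mem_range]
    constructor
    · rintro ⟨hm, hall⟩
      by_contra hcon
      push_neg at hcon
      rcases h3 with h3 | h3
      · omega
      · exact h3 (hall r (by omega))
    · intro hm
      exact ⟨by omega, fun t ht => h2 t (by omega)⟩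
  unfold kcnt
  rw [hset, Finset.card_range]

lemma lcnt_eq (N : ℕ) (x : ℕ → ℝ) (i r : ℕ) (h1 : r ≤ N - 1 - i)
    (h2 : ∀ t, t < r → x i < x (i + 1 + t))
    (h3 : r = N - 1 - i ∨ ¬ x i < x (i + 1 + r)) : lcnt N x i = r := by
  classical
  have hset : ((Finset.range (N - 1 - i)).filter (fun m => ∀ t ≤ m, x i < x (i + 1 + t)))
      = Finset.range r := by
    ext m
    simp only [Finset.mem_filter, Finset.mem_range]
    constructor
    · rintro ⟨hm, hall⟩
      by_contra hcon
      push_neg at hcon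
      rcases h3 with h3 | h3
      · omega
      · exact h3 (hall r (by omega))
    · intro hm
      exact ⟨by omega, fun t ht => h2 t (by omega)⟩
  unfold lcnt
  rw [hset, Finset.card_range]

lemma kcnt_run (x : ℕ → ℝ) {L i : ℕ} (hLi : L ≤ i)
    (h2 : ∀ j, L ≤ j → j < i → x i < x j)
    (h3 : L = 0 ∨ ¬ x i < x (L - 1)) : kcnt x i = i - L := by
  apply kcnt_eq x i (i - L) (by omega)
  · intro t ht
    exact h2 (i - 1 - t) (by omega) (by omega)
  · rcases h3 with h3 | h3
    · left; omega
    · right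
      have he : i - 1 - (i - L) = L - 1 := by omega
      rw [he]; exact h3

lemma lcnt_run (N : ℕ) (x : ℕ → ℝ) {i R : ℕ} (hiR : i ≤ R) (hRN : R < N)
    (h2 : ∀ j, i < j → j ≤ R → x i < x j)
    (h3 : R + 1 = N ∨ ¬ x i < x (R + 1)) : lcnt N x i = R - i := by
  apply lcnt_eq N x i (R - i) (by omega)
  · intro t ht
    exact h2 (i + 1 + t) (by omega) (by omega)
  · rcases h3 with h3 | h3
    · left; omega
    · right
      have he : i + 1 + (R - i) = R + 1 := by omega
      rw [he]; exact h3

lemma mgood_union {N : ℕ} {x : ℕ → ℝ} {L R L2 R2 : ℕ} {E1 E2 : Set ℕ}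
    {M1 M2 : Finset (ℕ × ℕ)}
    (h1 : MGood N x L R E1 M1) (h2 : MGood N x L2 R2 E2 M2)
    (hadj : L2 = R + 1) (hLR : L ≤ R + 1) (hR2 : R ≤ R2)
    (hE1 : ∀ u ∈ E1, u ≤ R) (hE2 : ∀ u ∈ E2, L2 ≤ u) :
    MGood N x L R2 (E1 ∪ E2) (M1 ∪ M2) := by
  obtain ⟨hb1, hc1, hd1, hn1, he1⟩ := h1
  obtain ⟨hb2, hc2, hd2, hn2, he2⟩ := h2
  refine ⟨?_, ?_, ?_, ?_, ?_⟩
  · intro p hp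
    rcases Finset.mem_union.mp hp with h | h
    · obtain ⟨a1, a2, a3, a4⟩ := hb1 p h
      exact ⟨a1, a2, a3.trans hR2, a4⟩
    · obtain ⟨a1, a2, a3, a4⟩ := hb2 p h
      exact ⟨by omega, a2, a3, a4⟩
  · intro i
    constructor
    · rintro ⟨g1, g2, g3⟩
      by_cases hiR : i ≤ R
      · obtain ⟨p, hp, hcov⟩ := (hc1 i).mp ⟨g1, hiR, fun hh => g3 (Set.mem_union_left _ hh)⟩
        exact ⟨p, Finset.mem_union_left _ hp, hcov⟩
      · obtain ⟨p, hp, hcov⟩ := (hc2 i).mp ⟨by omega, g2, fun hh => g3 (Set.mem_union_right _ hh)⟩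
        exact ⟨p, Finset.mem_union_right _ hp, hcov⟩
    · rintro ⟨p, hp, hcov⟩
      rcases Finset.mem_union.mp hp with h | h
      · obtain ⟨g1, g2, g3⟩ := (hc1 i).mpr ⟨p, h, hcov⟩
        refine ⟨g1, by omega, ?_⟩
        intro hh
        rcases (Set.mem_union i E1 E2).mp hh with hh | hh
        · exact g3 hh
        · have := hE2 i hh; omega
      · obtain ⟨g1, g2, g3⟩ := (hc2 i).mpr ⟨p, h, hcov⟩
        refine ⟨by omega, g2, ?_⟩
        intro hh
        rcases (Set.mem_union i E1 E2).mp hh with hh | hh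
        · have := hE1 i hh; omega
        · exact g3 hh
  · intro p hp q hq hne
    rcases Finset.mem_union.mp hp with h | h <;> rcases Finset.mem_union.mp hq with h' | h'
    · exact hd1 p h q h' hne
    · obtain ⟨a1, a2, a3, -⟩ := hb1 p h
      obtain ⟨b1, b2, b3, -⟩ := hb2 q h'
      omega
    · obtain ⟨a1, a2, a3, -⟩ := hb2 p h
      obtain ⟨b1, b2, b3, -⟩ := hb1 q h'
      omega
    · exact hd2 p h q h' hne
  · intro p hp q hq
    rcases Finset.mem_union.mp hp with h | h <;> rcases Finset.mem_union.mp hq with h' | h'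
    · exact hn1 p h q h'
    · obtain ⟨a1, a2, a3, -⟩ := hb1 p h
      obtain ⟨b1, b2, b3, -⟩ := hb2 q h'
      omega
    · obtain ⟨a1, a2, a3, -⟩ := hb2 p h
      obtain ⟨b1, b2, b3, -⟩ := hb1 q h'
      omega
    · exact hn2 p h q h'
  · intro p hp i hi
    rcases (Set.mem_union i E1 E2).mp hi with hh | hh <;> rcases Finset.mem_union.mp hp with h | h
    · exact he1 p h i hh
    · have := hE1 i hh
      obtain ⟨a1, a2, a3, -⟩ := hb2 p h
      omega
    · have := hE2 i hh
      obtain ⟨a1, a2, a3, -⟩ := hb1 p h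
      omega
    · exact he2 p h i hh

lemma mgood_close {N : ℕ} {x : ℕ → ℝ} {L2 R a u : ℕ} {M : Finset (ℕ × ℕ)}
    (h : MGood N x L2 R {u} M) (hadj : L2 = a + 1) (hu1 : L2 ≤ u) (hu2 : u ≤ R)
    (hg : Good N x (a, u)) : MGood N x a R ∅ (insert (a, u) M) := by
  obtain ⟨hb, hc, hd, hn, he⟩ := h
  have hnu : ∀ p ∈ M, p.1 ≠ u ∧ p.2 ≠ u := by
    intro p hp
    constructor <;> intro hcon
    · exact ((hc u).mpr ⟨p, hp, Or.inl hcon⟩).2.2 rfl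
    · exact ((hc u).mpr ⟨p, hp, Or.inr hcon⟩).2.2 rfl
  refine ⟨?_, ?_, ?_, ?_, ?_⟩
  · intro p hp
    rcases Finset.mem_insert.mp hp with rfl | hp'
    · exact ⟨le_refl a, by omega, hu2, hg⟩
    · obtain ⟨a1, a2, a3, a4⟩ := hb p hp'
      exact ⟨by omega, a2, a3, a4⟩
  · intro i
    constructor
    · rintro ⟨g1, g2, -⟩
      by_cases hia : i = a
      · exact ⟨(a, u), Finset.mem_insert_self _ _, Or.inl hia.symm⟩
      · by_cases hiu : i = u
        · exact ⟨(a, u), Finset.mem_insert_self _ _, Or.inr hiu.symm⟩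
        · obtain ⟨p, hp, hcov⟩ := (hc i).mp ⟨by omega, g2, by simp [hiu]⟩
          exact ⟨p, Finset.mem_insert_of_mem hp, hcov⟩
    · rintro ⟨p, hp, hcov⟩
      refine ⟨?_, ?_, Set.notMem_empty i⟩ <;>
      · rcases Finset.mem_insert.mp hp with rfl | hp'
        · dsimp only at hcov; omega
        · have := (hc i).mpr ⟨p, hp', hcov⟩; omega
  · intro p hp q hq hne
    rcases Finset.mem_insert.mp hp with rfl | hp' <;> rcases Finset.mem_insert.mp hq with rfl | hq'
    · exact absurd rfl hne
    · obtain ⟨a1, a2, a3, -⟩ := hb q hq'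
      obtain ⟨b1, b2⟩ := hnu q hq'
      dsimp only
      omega
    · obtain ⟨a1, a2, a3, -⟩ := hb p hp'
      obtain ⟨b1, b2⟩ := hnu p hp'
      dsimp only
      omega
    · exact hd p hp' q hq' hne
  · intro p hp q hq
    rcases Finset.mem_insert.mp hp with rfl | hp' <;> rcases Finset.mem_insert.mp hq with rfl | hq'
    · dsimp only; omega
    · have hstr := he q hq' u rfl
      dsimp only
      intro hcon
      exact hstr ⟨hcon.2.1, hcon.2.2⟩
    · obtain ⟨a1, a2, a3, -⟩ := hb p hp'
      dsimp only
      omega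
    · exact hn p hp' q hq'
  · intro p hp i hi
    exact absurd hi (Set.notMem_empty i)

lemma mgood_close' {N : ℕ} {x : ℕ → ℝ} {L R2 b u : ℕ} {M : Finset (ℕ × ℕ)}
    (h : MGood N x L R2 {u} M) (hadj : b = R2 + 1) (hu1 : L ≤ u) (hu2 : u ≤ R2)
    (hg : Good N x (u, b)) : MGood N x L b ∅ (insert (u, b) M) := by
  obtain ⟨hb, hc, hd, hn, he⟩ := h
  have hnu : ∀ p ∈ M, p.1 ≠ u ∧ p.2 ≠ u := by
    intro p hp
    constructor <;> intro hcon
    · exact ((hc u).mpr ⟨p, hp, Or.inl hcon⟩).2.2 rfl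
    · exact ((hc u).mpr ⟨p, hp, Or.inr hcon⟩).2.2 rfl
  refine ⟨?_, ?_, ?_, ?_, ?_⟩
  · intro p hp
    rcases Finset.mem_insert.mp hp with rfl | hp'
    · exact ⟨hu1, by omega, le_refl b, hg⟩
    · obtain ⟨a1, a2, a3, a4⟩ := hb p hp'
      exact ⟨a1, a2, by omega, a4⟩
  · intro i
    constructor
    · rintro ⟨g1, g2, -⟩
      by_cases hib : i = b
      · exact ⟨(u, b), Finset.mem_insert_self _ _, Or.inr hib.symm⟩
      · by_cases hiu : i = u
        · exact ⟨(u, b), Finset.mem_insert_self _ _, Or.inl hiu.symm⟩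
        · obtain ⟨p, hp, hcov⟩ := (hc i).mp ⟨g1, by omega, by simp [hiu]⟩
          exact ⟨p, Finset.mem_insert_of_mem hp, hcov⟩
    · rintro ⟨p, hp, hcov⟩
      refine ⟨?_, ?_, Set.notMem_empty i⟩ <;>
      · rcases Finset.mem_insert.mp hp with rfl | hp'
        · dsimp only at hcov; omega
        · have := (hc i).mpr ⟨p, hp', hcov⟩; omega
  · intro p hp q hq hne
    rcases Finset.mem_insert.mp hp with rfl | hp' <;> rcases Finset.mem_insert.mp hq with rfl | hq'
    · exact absurd rfl hne
    · obtain ⟨a1, a2, a3, -⟩ := hb q hq'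
      obtain ⟨b1, b2⟩ := hnu q hq'
      dsimp only
      omega
    · obtain ⟨a1, a2, a3, -⟩ := hb p hp'
      obtain ⟨b1, b2⟩ := hnu p hp'
      dsimp only
      omega
    · exact hd p hp' q hq' hne
  · intro p hp q hq
    rcases Finset.mem_insert.mp hp with rfl | hp' <;> rcases Finset.mem_insert.mp hq with rfl | hq'
    · dsimp only; omega
    · obtain ⟨a1, a2, a3, -⟩ := hb q hq'
      dsimp only
      omega
    · have hstr := he p hp' u rfl
      obtain ⟨a1, a2, a3, -⟩ := hb p hp'
      dsimp only
      intro hcon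
      exact hstr ⟨hcon.1, hcon.2.1⟩
    · exact hn p hp' q hq'
  · intro p hp i hi
    exact absurd hi (Set.notMem_empty i)

lemma mgood_expose {N : ℕ} {x : ℕ → ℝ} {L2 R a : ℕ} {E : Set ℕ} {M : Finset (ℕ × ℕ)}
    (h : MGood N x L2 R E M) (hadj : L2 = a + 1) : MGood N x a R ({a} ∪ E) M := by
  obtain ⟨hb, hc, hd, hn, he⟩ := h
  refine ⟨?_, ?_, hd, hn, ?_⟩
  · intro p hp
    obtain ⟨a1, a2, a3, a4⟩ := hb p hp
    exact ⟨by omega, a2, a3, a4⟩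
  · intro i
    constructor
    · rintro ⟨g1, g2, g3⟩
      have hia : i ≠ a := fun hh => g3 (Set.mem_union_left _ (Set.mem_singleton_iff.mpr hh))
      exact (hc i).mp ⟨by omega, g2, fun hh => g3 (Set.mem_union_right _ hh)⟩
    · rintro ⟨p, hp, hcov⟩
      obtain ⟨g1, g2, g3⟩ := (hc i).mpr ⟨p, hp, hcov⟩
      refine ⟨by omega, g2, ?_⟩
      intro hh
      rcases (Set.mem_union i _ _).mp hh with hh | hh
      · have : i = a := Set.mem_singleton_iff.mp hh
        omega
      · exact g3 hh
  · intro p hp i hi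
    rcases (Set.mem_union i _ _).mp hi with hh | hh
    · have : i = a := Set.mem_singleton_iff.mp hh
      obtain ⟨a1, a2, a3, -⟩ := hb p hp
      omega
    · exact he p hp i hh



lemma key (N : ℕ) (x : ℕ → ℝ) (hd : ∀ a < N, ∀ b < N, a ≠ b → x a ≠ x b) :
    ∀ s L R : ℕ, L + s = R + 1 → R < N →
      (L = 0 ∨ ∀ i, L ≤ i → i ≤ R → x (L - 1) < x i) →
      (R + 1 = N ∨ ∀ i, L ≤ i → i ≤ R → x (R + 1) < x i) →
      ((Even s → ∃ M, MGood N x L R ∅ M) ∧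
       (Odd s →
         (∃ u M, L ≤ u ∧ u ≤ R ∧ Even (u - L) ∧ Even (lcnt N x u) ∧
            (∀ i, L ≤ i → i < u → x u < x i) ∧ MGood N x L R {u} M) ∧
         (∃ u M, L ≤ u ∧ u ≤ R ∧ Even (R - u) ∧ Even (kcnt x u) ∧
            (∀ i, u < i → i ≤ R → x u < x i) ∧ MGood N x L R {u} M))) := by
  intro s
  induction s using Nat.strong_induction_on with
  | _ s IH =>
  intro L R hs hRN hSL hSR
  rcases Nat.eq_zero_or_pos s with rfl | hpos
  · -- empty interval
    constructor
    · intro _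
      refine ⟨∅, ?_, ?_, ?_, ?_, ?_⟩
      · intro p hp; exact absurd hp (Finset.notMem_empty p)
      · intro i
        constructor
        · rintro ⟨g1, g2, -⟩; omega
        · rintro ⟨p, hp, -⟩; exact absurd hp (Finset.notMem_empty p)
      · intro p hp; exact absurd hp (Finset.notMem_empty p)
      · intro p hp; exact absurd hp (Finset.notMem_empty p)
      · intro p hp; exact absurd hp (Finset.notMem_empty p)
    · intro hodd
      exact absurd hodd (by simp)
  · -- nonempty interval
    have hLR : L ≤ R := by omega
    obtain ⟨m, hmI, hmle⟩ := Finset.exists_min_image (Finset.Icc L R) x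
      ⟨L, Finset.mem_Icc.mpr ⟨le_refl L, hLR⟩⟩
    rw [Finset.mem_Icc] at hmI
    have hmin : ∀ i, L ≤ i → i ≤ R → i ≠ m → x m < x i := by
      intro i h1 h2 hne
      have hle := hmle i (Finset.mem_Icc.mpr ⟨h1, h2⟩)
      exact lt_of_le_of_ne hle (hd m (by omega) i (by omega) (by omega))
    have hSL' : L = 0 ∨ ¬ x m < x (L - 1) := by
      rcases hSL with h | h
      · exact Or.inl h
      · exact Or.inr (lt_asymm (h m hmI.1 hmI.2))
    have hSR' : R + 1 = N ∨ ¬ x m < x (R + 1) := by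
      rcases hSR with h | h
      · exact Or.inl h
      · exact Or.inr (lt_asymm (h m hmI.1 hmI.2))
    have hkm : kcnt x m = m - L :=
      kcnt_run x hmI.1 (fun j h1 h2 => hmin j h1 (by omega) (by omega)) hSL'
    have hlcm : lcnt N x m = R - m :=
      lcnt_run N x hmI.2 hRN (fun j h1 h2 => hmin j (by omega) h2 (by omega)) hSR'
    -- safety for right subinterval [m+1, R]
    have hSL2 : m + 1 = 0 ∨ ∀ i, m + 1 ≤ i → i ≤ R → x (m + 1 - 1) < x i := by
      right; intro i h1 h2
      simpa using hmin i (by omega) h2 (by omega)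
    have hSR2 : R + 1 = N ∨ ∀ i, m + 1 ≤ i → i ≤ R → x (R + 1) < x i := by
      rcases hSR with h | h
      · exact Or.inl h
      · exact Or.inr fun i h1 h2 => h i (by omega) h2
    -- safety for left subinterval [L, m-1] (useful when L < m)
    have hSL1 : L = 0 ∨ ∀ i, L ≤ i → i ≤ m - 1 → x (L - 1) < x i := by
      rcases hSL with h | h
      · exact Or.inl h
      · exact Or.inr fun i h1 h2 => h i h1 (by omega)
    have hSR1 : L < m → (m - 1 + 1 = N ∨ ∀ i, L ≤ i → i ≤ m - 1 → x (m - 1 + 1) < x i) := by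
      intro hLm
      right; intro i h1 h2
      have he1 : m - 1 + 1 = m := by omega
      rw [he1]
      exact hmin i h1 (by omega) (by omega)
    constructor
    · -- Even s : full matching
      intro hse
      have hse2 := Nat.even_iff.mp hse
      rcases Nat.even_or_odd (m - L) with hp | hp
      · -- partner of m on the right
        have hp2 := Nat.even_iff.mp hp
        have hmR : m < R := by omega
        obtain ⟨-, hB⟩ := IH (R - m) (by omega) (m + 1) R (by omega) hRN hSL2 hSR2
        obtain ⟨⟨u, M1, hu1, hu2, hu3, hu4, hu5, hM1⟩, -⟩ := hB (Nat.odd_iff.mpr (by omega))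
        have hxmu : x m < x u := hmin u (by omega) hu2 (by omega)
        have hku : kcnt x u = u - (m + 1) :=
          kcnt_run x hu1 hu5 (Or.inr (by simpa using lt_asymm hxmu))
        have hGood : Good N x (m, u) := by
          constructor
          · intro _
            refine ⟨?_, hu4, ?_⟩
            · rw [hku]; exact hu3
            · rw [hlcm]; exact Nat.odd_iff.mpr (by omega)
          · intro hcon; exact absurd hcon (lt_asymm hxmu)
        have hclosed := mgood_close hM1 rfl hu1 hu2 hGood
        rcases eq_or_lt_of_le hmI.1 with rfl | hLm
        · exact ⟨_, hclosed⟩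
        · obtain ⟨hA0, -⟩ := IH (m - L) (by omega) L (m - 1) (by omega) (by omega) hSL1 (hSR1 hLm)
          obtain ⟨M0, hM0⟩ := hA0 hp
          have hfin := mgood_union hM0 hclosed (by omega) (by omega) (by omega)
            (by simp) (by simp)
          exact ⟨_, by simpa using hfin⟩
      · -- partner of m on the left
        have hp2 := Nat.odd_iff.mp hp
        have hLm : L < m := by omega
        obtain ⟨-, hB⟩ := IH (m - L) (by omega) L (m - 1) (by omega) (by omega) hSL1 (hSR1 hLm)
        obtain ⟨-, ⟨u, Mleft, hu1, hu2, hu3, hu4, hu5, hMleft⟩⟩ := hB (Nat.odd_iff.mpr (by omega))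
        have hxmu : x m < x u := hmin u hu1 (by omega) (by omega)
        have hlu : lcnt N x u = m - 1 - u := by
          apply lcnt_run N x hu2 (by omega) hu5
          right
          have he1 : m - 1 + 1 = m := by omega
          rw [he1]
          exact lt_asymm hxmu
        have hGood : Good N x (u, m) := by
          constructor
          · intro hcon; exact absurd hcon (lt_asymm hxmu)
          · intro _
            refine ⟨hu4, ?_, ?_⟩
            · rw [hlu]; exact hu3
            · rw [hkm]; exact Nat.odd_iff.mpr (by omega)
        have hclosed := mgood_close' hMleft (by omega) hu1 hu2 hGood
        obtain ⟨hA1, -⟩ := IH (R - m) (by omega) (m + 1) R (by omega) hRN hSL2 hSR2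
        obtain ⟨M1, hM1⟩ := hA1 (Nat.even_iff.mpr (by omega))
        have hfin := mgood_union hclosed hM1 rfl (by omega) (by omega) (by simp) (by simp)
        exact ⟨_, by simpa using hfin⟩
    · -- Odd s : expose one element
      intro hso
      have hso2 := Nat.odd_iff.mp hso
      rcases Nat.even_or_odd (m - L) with hp | hp
      · -- expose m itself; works for both directions
        have hp2 := Nat.even_iff.mp hp
        obtain ⟨hA1, -⟩ := IH (R - m) (by omega) (m + 1) R (by omega) hRN hSL2 hSR2
        obtain ⟨M1, hM1⟩ := hA1 (Nat.even_iff.mpr (by omega))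
        have hexp := mgood_expose hM1 rfl
        have hcomb : ∃ M, MGood N x L R {m} M := by
          rcases eq_or_lt_of_le hmI.1 with rfl | hLm
          · exact ⟨M1, by simpa using hexp⟩
          · obtain ⟨hA0, -⟩ := IH (m - L) (by omega) L (m - 1) (by omega) (by omega) hSL1 (hSR1 hLm)
            obtain ⟨M0, hM0⟩ := hA0 hp
            have := mgood_union hM0 hexp (by omega) (by omega) (by omega)
              (by simp) (by intro v hv; simp at hv; omega)
            exact ⟨_, by simpa using this⟩
        obtain ⟨M, hM⟩ := hcomb
        constructor
        · exact ⟨m, M, hmI.1, hmI.2, hp, by rw [hlcm]; exact Nat.even_iff.mpr (by omega),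
            fun i h1 h2 => hmin i h1 (by omega) (by omega), hM⟩
        · exact ⟨m, M, hmI.1, hmI.2, Nat.even_iff.mpr (by omega), by rw [hkm]; exact hp,
            fun i h1 h2 => hmin i (by omega) h2 (by omega), hM⟩
      · -- m - L odd : m is matched, exposure comes from a subinterval
        have hp2 := Nat.odd_iff.mp hp
        have hLm : L < m := by omega
        have hmR : m < R := by omega
        constructor
        · -- B-left
          obtain ⟨-, hBl⟩ := IH (m - L) (by omega) L (m - 1) (by omega) (by omega) hSL1 (hSR1 hLm)
          obtain ⟨⟨u, Mleft, hu1, hu2, hu3, hu4, hu5, hMleft⟩, -⟩ :=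
            hBl (Nat.odd_iff.mpr (by omega))
          obtain ⟨-, hBr⟩ := IH (R - m) (by omega) (m + 1) R (by omega) hRN hSL2 hSR2
          obtain ⟨⟨e, M1, he1, he2, he3, he4, he5, hM1⟩, -⟩ :=
            hBr (Nat.odd_iff.mpr (by omega))
          have hxme : x m < x e := hmin e (by omega) he2 (by omega)
          have hke : kcnt x e = e - (m + 1) :=
            kcnt_run x he1 he5 (Or.inr (by simpa using lt_asymm hxme))
          have hGood : Good N x (m, e) := by
            constructor
            · intro _
              refine ⟨?_, he4, ?_⟩
              · rw [hke]; exact he3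
              · rw [hlcm]; exact Nat.odd_iff.mpr (by omega)
            · intro hcon; exact absurd hcon (lt_asymm hxme)
          have hclosed := mgood_close hM1 rfl he1 he2 hGood
          have hfin := mgood_union hMleft hclosed (by omega) (by omega) (by omega)
            (by intro v hv; simp at hv; omega)
            (by simp)
          exact ⟨u, _, hu1, by omega, hu3, hu4, hu5, by simpa using hfin⟩
        · -- B-right
          obtain ⟨-, hBl⟩ := IH (m - L) (by omega) L (m - 1) (by omega) (by omega) hSL1 (hSR1 hLm)
          obtain ⟨-, ⟨e, Mleft, he1, he2, he3, he4, he5, hMleft⟩⟩ :=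
            hBl (Nat.odd_iff.mpr (by omega))
          obtain ⟨-, hBr⟩ := IH (R - m) (by omega) (m + 1) R (by omega) hRN hSL2 hSR2
          obtain ⟨-, ⟨u, M1, hu1, hu2, hu3, hu4, hu5, hM1⟩⟩ :=
            hBr (Nat.odd_iff.mpr (by omega))
          have hxme : x m < x e := hmin e he1 (by omega) (by omega)
          have hle : lcnt N x e = m - 1 - e := by
            apply lcnt_run N x he2 (by omega) he5
            right
            have heq : m - 1 + 1 = m := by omega
            rw [heq]
            exact lt_asymm hxme
          have hGood : Good N x (e, m) := by
            constructor
            · intro hcon; exact absurd hcon (lt_asymm hxme)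
            · intro _
              refine ⟨he4, ?_, ?_⟩
              · rw [hle]; exact he3
              · rw [hkm]; exact Nat.odd_iff.mpr (by omega)
          have hclosed := mgood_close' hMleft (by omega) he1 he2 hGood
          have hfin := mgood_union hclosed hM1 rfl (by omega) (by omega)
            (by simp)
            (by intro v hv; simp at hv; omega)
          exact ⟨u, _, by omega, hu2, hu3, hu4, hu5, by simpa using hfin⟩



end BCD

/-- For every even `n` and every sequence `x_0, …, x_{n-3}` of distinct reals, there is a
bounding chord diagram: a non-crossing perfect matching of `{0, …, n-3}` such that for each
matched pair `(a,b)` with `a < b`, if `x_a < x_b` then `k_b` and `ℓ_b` are both even and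
`ℓ_a` is odd, while if `x_a > x_b` then `k_a` and `ℓ_a` are both even and `k_b` is odd. -/
theorem exists_bounding_chord_diagram (n : ℕ) (hn : 4 ≤ n) (he : Even n) (x : ℕ → ℝ)
    (hinj : ∀ a < n - 2, ∀ b < n - 2, a ≠ b → x a ≠ x b) :
    ∃ M : Finset (ℕ × ℕ), IsNCMatchingN (n - 2) M ∧
      ∀ p ∈ M,
        (x p.1 < x p.2 →
          Even (kcnt x p.2) ∧ Even (lcnt (n - 2) x p.2) ∧ Odd (lcnt (n - 2) x p.1)) ∧
        (x p.2 < x p.1 →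
          Even (kcnt x p.1) ∧ Even (lcnt (n - 2) x p.1) ∧ Odd (kcnt x p.2)) := by
  have hNe : Even (n - 2) := by
    rcases he with ⟨k, hk⟩
    exact ⟨k - 1, by omega⟩
  obtain ⟨hA, -⟩ := BCD.key (n - 2) x hinj (n - 2) 0 (n - 2 - 1) (by omega) (by omega)
    (Or.inl rfl) (Or.inl (by omega))
  obtain ⟨M, hb, hcov, hdisj, hnc, -⟩ := hA hNe
  refine ⟨M, ⟨?_, ?_, hnc⟩, ?_⟩
  · intro p hp
    obtain ⟨-, h2, h3, -⟩ := hb p hp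
    exact ⟨h2, by omega⟩
  · intro i hi
    obtain ⟨p, hp, hpe⟩ := (hcov i).mp ⟨Nat.zero_le i, by omega, Set.notMem_empty i⟩
    refine ⟨p, ⟨hp, hpe⟩, ?_⟩
    rintro q ⟨hq, hqe⟩
    by_contra hne
    obtain ⟨d1, d2, d3, d4⟩ := hdisj q hq p hp hne
    rcases hqe with h | h <;> rcases hpe with h' | h' <;> omega
  · intro p hp
    obtain ⟨-, -, -, hg⟩ := hb p hp
    exact ⟨hg.1, hg.2⟩
end

section
/- Let x_0,…,x_{n−3} be distinct reals with ℓ_0 odd, where ℓ_0 = max{j : x_ℓ > x_0 for all 1 ≤ ℓ ≤ j}. Let i_1 < i_2 < ⋯ < i_m be the indices in {1,…,ℓ_0} of prefix-minima of x_1,…,x_{ℓ_0} (i.e., x_{i_j} < x_t for all 1 ≤ t < i_j). Then there exists some j such that ℓ_{i_j} := (number of consecutive larger elements immediately following x_{i_j}) is even, and for the minimal such j, k_{i_j} = i_j − 1 is even. -/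
private lemma dc_mem_iff {S : Finset ℕ} (h : ∀ m ∈ S, ∀ k, k ≤ m → k ∈ S) (m : ℕ) :
    m ∈ S ↔ m < S.card := by
  constructor
  · intro hm
    have hsub : Finset.range (m + 1) ⊆ S := fun k hk =>
      h m hm k (Nat.lt_succ_iff.mp (Finset.mem_range.mp hk))
    have := Finset.card_le_card hsub
    simpa using this
  · intro hm
    by_contra hmem
    have hsub : S ⊆ Finset.range m := by
      intro k hk
      rw [Finset.mem_range]
      by_contra hk'
      exact hmem (h k hk m (Nat.le_of_not_lt hk'))
    have := Finset.card_le_card hsub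
    simp only [Finset.card_range] at this
    omega

open scoped Classical in
private lemma lcnt_spec (N : ℕ) (x : ℕ → ℝ) (i m : ℕ) :
    m < lcnt N x i ↔ (m < N - 1 - i ∧ ∀ t ≤ m, x i < x (i + 1 + t)) := by
  rw [lcnt]
  rw [← dc_mem_iff (S := (Finset.range (N - 1 - i)).filter
    (fun m => ∀ t ≤ m, x i < x (i + 1 + t))) ?_ m]
  · simp [Finset.mem_filter]
  · intro a ha k hk
    simp only [Finset.mem_filter, Finset.mem_range] at ha ⊢
    exact ⟨lt_of_le_of_lt hk ha.1, fun t ht => ha.2 t (ht.trans hk)⟩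

private lemma lcnt_run (N : ℕ) (x : ℕ → ℝ) (i : ℕ) :
    ∀ t, t < lcnt N x i → x i < x (i + 1 + t) := fun t ht =>
  ((lcnt_spec N x i t).mp ht).2 t le_rfl

private lemma lcnt_le (N : ℕ) (x : ℕ → ℝ) (i : ℕ) : lcnt N x i ≤ N - 1 - i := by
  by_contra h
  push_neg at h
  have := ((lcnt_spec N x i (N - 1 - i)).mp h).1
  omega

private lemma lcnt_stop (N : ℕ) (x : ℕ → ℝ) (i : ℕ) (h : lcnt N x i < N - 1 - i) :
    ¬ x i < x (i + 1 + lcnt N x i) := by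
  intro hlt
  have : lcnt N x i < lcnt N x i := (lcnt_spec N x i (lcnt N x i)).mpr
    ⟨h, fun t ht => (lt_or_eq_of_le ht).elim (lcnt_run N x i t) (fun e => e ▸ hlt)⟩
  omega

private lemma x0_lt (N : ℕ) (x : ℕ → ℝ) (i : ℕ) (h1 : 1 ≤ i) (h2 : i ≤ lcnt N x 0) :
    x 0 < x i := by
  have := lcnt_run N x 0 (i - 1) (by omega)
  have e : 0 + 1 + (i - 1) = i := by omega
  rwa [e] at this

open scoped Classical in
private lemma kcnt_eq (x : ℕ → ℝ) (i : ℕ) (h1 : 1 ≤ i)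
    (hpm : ∀ t, 1 ≤ t → t < i → x i < x t) (h0 : x 0 < x i) : kcnt x i = i - 1 := by
  rw [kcnt]
  have hset : (Finset.range i).filter (fun m => ∀ t ≤ m, x i < x (i - 1 - t))
      = Finset.range (i - 1) := by
    ext m
    simp only [Finset.mem_filter, Finset.mem_range]
    constructor
    · rintro ⟨hmi, hP⟩
      by_contra h
      push_neg at h
      have hx := hP (i - 1) h
      have e : i - 1 - (i - 1) = 0 := by omega
      rw [e] at hx
      exact absurd h0 (lt_asymm hx)
    · intro hm
      refine ⟨by omega, fun t ht => ?_⟩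
      exact hpm _ (by omega) (by omega)
  rw [hset, Finset.card_range]

private lemma key (N : ℕ) (x : ℕ → ℝ)
    (hinj : ∀ a < N, ∀ b < N, a ≠ b → x a ≠ x b)
    (hodd : Odd (lcnt N x 0)) :
    ∀ d i, lcnt N x 0 - i ≤ d → 1 ≤ i → i ≤ lcnt N x 0 → Even (i - 1) →
      (∀ t, 1 ≤ t → t < i → x i < x t) →
      ∃ i', i ≤ i' ∧ i' ≤ lcnt N x 0 ∧ (∀ t, 1 ≤ t → t < i' → x i' < x t) ∧
        Even (lcnt N x i') ∧ Even (i' - 1) ∧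
        (∀ j, i ≤ j → j < i' → (∀ t, 1 ≤ t → t < j → x j < x t) →
          ¬ Even (lcnt N x j)) := by
  set L := lcnt N x 0 with hL
  have hL1 : 1 ≤ L := hodd.pos
  have hLN : L ≤ N - 1 := by have := lcnt_le N x 0; omega
  intro d
  induction d with
  | zero =>
    intro i hd h1 h2 hev hpm
    -- i = L
    have hiL : i = L := by omega
    refine ⟨i, le_rfl, h2, hpm, ?_, hev, fun j hj1 hj2 _ => by omega⟩
    -- lcnt i must be even: if odd, it would be < L - i = 0, contradiction;
    -- show lcnt i = 0 in fact.
    by_contra hodd'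
    -- lcnt i ≥ 1, so L - i ≥ 1 or contradiction as in step case; here i = L.
    have hc1 : 1 ≤ lcnt N x i := by
      rcases Nat.eq_zero_or_pos (lcnt N x i) with h | h
      · exact absurd (h ▸ Even.zero) hodd'
      · exact h
    have hspec := (lcnt_spec N x i 0).mp (by omega)
    have hx := hspec.2 0 le_rfl
    -- x i < x (i+1+0) = x (L+1); but x 0's run stops at L
    have hLlt : L < N - 1 := by omega
    have hstop := lcnt_stop N x 0 (by omega)
    have e : 0 + 1 + L = i + 1 + 0 := by omega
    rw [e] at hstop
    exact hstop (lt_trans (x0_lt N x i h1 h2) hx)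
  | succ d ih =>
    intro i hd h1 h2 hev hpm
    by_cases hce : Even (lcnt N x i)
    · exact ⟨i, le_rfl, h2, hpm, hce, hev, fun j hj1 hj2 _ => by omega⟩
    set c := lcnt N x i with hc
    have hoddi : Odd i := by
      have := hev.add_one
      rwa [Nat.sub_add_cancel h1] at this
    -- show c < L - i
    have hclt : c < L - i := by
      by_contra hge
      push_neg at hge
      rcases Nat.lt_or_ge (L - i) c with hlt | hge2
      · -- run of i extends past L: x i < x (L+1), contradiction with run of 0 stopping
        have hspec := (lcnt_spec N x i (L - i)).mp hlt
        have hx := hspec.2 (L - i) le_rfl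
        have hLlt : L < N - 1 := by have := hspec.1; omega
        have hstop := lcnt_stop N x 0 (by omega)
        have e : 0 + 1 + L = i + 1 + (L - i) := by omega
        rw [e] at hstop
        exact hstop (lt_trans (x0_lt N x i h1 h2) hx)
      · -- c = L - i, even since L, i both odd
        have hceq : c = L - i := le_antisymm hge2 hge
        have : Even c := hceq ▸ Nat.Odd.sub_odd hodd hoddi
        exact hce this
    have hoddc : Odd c := Nat.not_even_iff_odd.mp hce
    set j := i + c + 1 with hj
    have hjL : j ≤ L := by omega
    have hNlt : c < N - 1 - i := by omega
    have hstop := lcnt_stop N x i hNlt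
    have ej : i + 1 + c = j := by omega
    rw [ej] at hstop
    have hN2 : 2 ≤ N := by omega
    have hxji : x j < x i := by
      have hne : x i ≠ x j := hinj i (by omega) j (by omega) (by omega)
      rcases lt_or_eq_of_le (le_of_not_gt hstop) with h | h
      · exact h
      · exact absurd h.symm hne
    have hpmj : ∀ t, 1 ≤ t → t < j → x j < x t := by
      intro t ht1 htj
      rcases lt_trichotomy t i with h | h | h
      · exact lt_trans hxji (hpm t ht1 h)
      · rw [← h] at hxji; exact hxji
      · have hrun := lcnt_run N x i (t - i - 1) (by omega)
        have e : i + 1 + (t - i - 1) = t := by omega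
        rw [e] at hrun
        exact lt_trans hxji hrun
    have hevj : Even (j - 1) := by
      have : j - 1 = i + c := by omega
      rw [this]
      exact hoddi.add_odd hoddc
    obtain ⟨i', hii', hi'L, hpm', hev', hevp', hmin'⟩ :=
      ih j (by omega) (by omega) hjL hevj hpmj
    refine ⟨i', by omega, hi'L, hpm', hev', hevp', ?_⟩
    intro k hk1 hk2 hpmk
    rcases lt_trichotomy k j with h | h | h
    · rcases Nat.lt_or_ge k (i + 1) with hki | hki
      · have : k = i := by omega
        rwa [this]
      · -- i < k < j : k is in the run of i, so not a prefix min — contradiction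
        exfalso
        have hrun := lcnt_run N x i (k - i - 1) (by omega)
        have e : i + 1 + (k - i - 1) = k := by omega
        rw [e] at hrun
        exact lt_asymm hrun (hpmk i h1 (by omega))
    · exact h ▸ hmin' j le_rfl (by omega) hpmj
    · exact hmin' k (by omega) hk2 hpmk

/-- Key parity lemma (Case 2 of the bounding chord diagram construction). Let
`x_0, …, x_{N-1}` be distinct reals with `ℓ_0` odd. Among the prefix-minima indices
`i ∈ {1, …, ℓ_0}` of `x_1, …, x_{ℓ_0}` (those `i` with `x_i < x_t` for all `1 ≤ t < i`),
there exists one with `ℓ_i` even; and the minimal such index `i` satisfies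
`k_i = i - 1`, which is even. -/
theorem exists_prefix_min_with_even_l (N : ℕ) (x : ℕ → ℝ)
    (hinj : ∀ a < N, ∀ b < N, a ≠ b → x a ≠ x b)
    (hodd : Odd (lcnt N x 0)) :
    ∃ i, 1 ≤ i ∧ i ≤ lcnt N x 0 ∧ (∀ t, 1 ≤ t → t < i → x i < x t) ∧
      Even (lcnt N x i) ∧
      (∀ i', 1 ≤ i' → i' < i → (∀ t, 1 ≤ t → t < i' → x i' < x t) →
        ¬ Even (lcnt N x i')) ∧
      kcnt x i = i - 1 ∧ Even (i - 1) := by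
  have hL1 : 1 ≤ lcnt N x 0 := hodd.pos
  obtain ⟨i, h1, h2, hpm, hev, hevp, hmin⟩ :=
    key N x hinj hodd (lcnt N x 0) 1 (by omega) le_rfl hL1 (by simp)
      (fun t ht1 ht2 => by omega)
  refine ⟨i, h1, h2, hpm, hev, hmin, ?_, hevp⟩
  exact kcnt_eq x i h1 hpm (x0_lt N x i h1 h2)
end

section
/- In any quadrangulation of a convex polygon with vertices labeled 0,1,…,n−1 cyclically (n even), every diagonal joins two vertices of opposite parity. -/
/-- `a` and `b` are adjacent vertices (joined by a side) of the convex `n`-gon with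
vertices labeled cyclically `0, 1, …, n-1`. -/
def IsSide (n : ℕ) (a b : Fin n) : Prop :=
  (a : ℕ) + 1 = (b : ℕ) ∨ (b : ℕ) + 1 = (a : ℕ) ∨
    ((a : ℕ) = 0 ∧ (b : ℕ) = n - 1) ∨ ((b : ℕ) = 0 ∧ (a : ℕ) = n - 1)

/-- `p` (an ordered pair `(a,b)` with `a < b`) is a diagonal of the convex `n`-gon:
its endpoints are distinct non-adjacent vertices. -/
def IsDiag (n : ℕ) (p : Fin n × Fin n) : Prop :=
  p.1 < p.2 ∧ ¬ IsSide n p.1 p.2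

/-- Two chords of the convex `n`-gon cross iff their endpoints interleave
(for vertices labeled `0, …, n-1`, in terms of the linear order). -/
def Crossing (n : ℕ) (p q : Fin n × Fin n) : Prop :=
  (p.1 < q.1 ∧ q.1 < p.2 ∧ p.2 < q.2) ∨ (q.1 < p.1 ∧ p.1 < q.2 ∧ q.2 < p.2)

/-- `a` and `b` are joined by a side of the polygon or by a diagonal of `D`. -/
def Conn (n : ℕ) (D : Finset (Fin n × Fin n)) (a b : Fin n) : Prop :=
  IsSide n a b ∨ (a, b) ∈ D ∨ (b, a) ∈ D

/-- `x` lies strictly between `a` and `b` going cyclically (counterclockwise) from `a` to `b`. -/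
def CBtw (n : ℕ) (a b x : Fin n) : Prop :=
  (a < x ∧ x < b) ∨ (b < a ∧ (a < x ∨ x < b))

/-- `b` is the cyclic successor of `a` within the vertex set `F`. -/
def FConsec (n : ℕ) (F : Finset (Fin n)) (a b : Fin n) : Prop :=
  a ∈ F ∧ b ∈ F ∧ a ≠ b ∧ ∀ x ∈ F, ¬ CBtw n a b x

/-- `F` is the vertex set of an internal face of the dissection of the convex `n`-gon by
the non-crossing diagonals `D`: cyclically consecutive vertices of `F` are joined by sides
or diagonals, and no diagonal of `D` joins two non-consecutive vertices of `F`. -/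
def IsFace (n : ℕ) (D : Finset (Fin n × Fin n)) (F : Finset (Fin n)) : Prop :=
  3 ≤ F.card ∧
  (∀ a ∈ F, ∀ b ∈ F, FConsec n F a b → Conn n D a b) ∧
  (∀ p ∈ D, p.1 ∈ F → p.2 ∈ F → FConsec n F p.1 p.2 ∨ FConsec n F p.2 p.1)

/-- A dissection of the convex `n`-gon: a set of pairwise non-crossing diagonals. -/
def IsDissection (n : ℕ) (D : Finset (Fin n × Fin n)) : Prop :=
  (∀ p ∈ D, IsDiag n p) ∧ ∀ p ∈ D, ∀ q ∈ D, ¬ Crossing n p q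

/-- A quadrangulation of the convex `n`-gon: a set of non-crossing diagonals dividing
it into quadrilaterals, i.e. every internal face has exactly 4 vertices. -/
def IsQuadrangulation (n : ℕ) (D : Finset (Fin n × Fin n)) : Prop :=
  IsDissection n D ∧ ∀ F : Finset (Fin n), IsFace n D F → F.card = 4
/-- Every diagonal spans at least 2. -/
lemma gap2 {n : ℕ} {D : Finset (Fin n × Fin n)} (hDiag : ∀ p ∈ D, IsDiag n p)
    {q : Fin n × Fin n} (hq : q ∈ D) : (q.1 : ℕ) + 2 ≤ (q.2 : ℕ) := by
  have h := hDiag q hq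
  have hlt : (q.1 : ℕ) < (q.2 : ℕ) := Fin.lt_def.mp h.1
  have h1 : ¬ ((q.1 : ℕ) + 1 = (q.2 : ℕ)) := fun hh => h.2 (Or.inl hh)
  omega

/-- `v` is separated from the chord `(a,b)` (inside the region `[a,b]`) by some
diagonal of `D` other than `(a,b)`. -/
def SepV (n : ℕ) (D : Finset (Fin n × Fin n)) (a b v : Fin n) : Prop :=
  ∃ r ∈ D, r ≠ (a, b) ∧ (a : ℕ) ≤ (r.1 : ℕ) ∧ (r.1 : ℕ) < (v : ℕ) ∧
    (v : ℕ) < (r.2 : ℕ) ∧ (r.2 : ℕ) ≤ (b : ℕ)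

open Classical in
/-- The vertices of the face adjacent to the chord `(a,b)` strictly between `a` and `b`. -/
noncomputable def Mid (n : ℕ) (D : Finset (Fin n × Fin n)) (a b : Fin n) : Finset (Fin n) :=
  Finset.univ.filter fun v => (a : ℕ) < (v : ℕ) ∧ (v : ℕ) < (b : ℕ) ∧ ¬ SepV n D a b v

lemma mem_Mid {n : ℕ} {D : Finset (Fin n × Fin n)} {a b v : Fin n} :
    v ∈ Mid n D a b ↔ (a : ℕ) < (v : ℕ) ∧ (v : ℕ) < (b : ℕ) ∧ ¬ SepV n D a b v := by
  simp [Mid]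

lemma mid_nonempty {n : ℕ} {D : Finset (Fin n × Fin n)}
    (hNC : ∀ p ∈ D, ∀ q ∈ D, ¬ Crossing n p q)
    {a b : Fin n} (hab : (a, b) ∈ D) (h2 : (a : ℕ) + 2 ≤ (b : ℕ)) :
    (Mid n D a b).Nonempty := by
  classical
  set C : Finset (Fin n) :=
    Finset.univ.filter (fun c => (a:ℕ) < (c:ℕ) ∧ (c:ℕ) < (b:ℕ) ∧ (c, b) ∈ D) with hCdef
  have hmemC : ∀ c : Fin n, c ∈ C ↔ (a:ℕ) < (c:ℕ) ∧ (c:ℕ) < (b:ℕ) ∧ (c, b) ∈ D := by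
    intro c; simp [hCdef]
  by_cases hC : C.Nonempty
  · obtain ⟨c, hcC, hmin⟩ := Finset.exists_min_image C (fun z => (z : ℕ)) hC
    rw [hmemC] at hcC
    refine ⟨c, mem_Mid.mpr ⟨hcC.1, hcC.2.1, ?_⟩⟩
    rintro ⟨r, hrD, hrne, g1, g2, g3, g4⟩
    have hncr := hNC r hrD (c, b) hcC.2.2
    have hr2b : (r.2 : ℕ) = (b : ℕ) := by
      by_contra hne2
      exact hncr (Or.inl ⟨Fin.lt_def.mpr (show (r.1:ℕ) < (c:ℕ) from g2),
        Fin.lt_def.mpr (show (c:ℕ) < (r.2:ℕ) from g3),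
        Fin.lt_def.mpr (show (r.2:ℕ) < (b:ℕ) by omega)⟩)
    have hr2b' : r.2 = b := Fin.val_injective hr2b
    have hr1a : r.1 ≠ a := fun h => hrne (Prod.ext_iff.mpr ⟨h, hr2b'⟩)
    have hr1a' : (a : ℕ) < (r.1 : ℕ) := by
      have hne3 : (a : ℕ) ≠ (r.1 : ℕ) := fun h => hr1a (Fin.val_injective h.symm)
      omega
    have hr1C : r.1 ∈ C := (hmemC r.1).mpr ⟨hr1a', by omega, by rw [← hr2b']; exact hrD⟩
    have := hmin r.1 hr1C
    omega
  · have hbn : (b : ℕ) < n := b.isLt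
    obtain ⟨v, hv⟩ : ∃ v : Fin n, (v:ℕ) = (b:ℕ) - 1 := ⟨⟨(b:ℕ)-1, by omega⟩, rfl⟩
    refine ⟨v, mem_Mid.mpr ⟨by omega, by omega, ?_⟩⟩
    rintro ⟨r, hrD, hrne, g1, g2, g3, g4⟩
    have hr2b' : r.2 = b := Fin.val_injective (by omega)
    have hr1a : r.1 ≠ a := fun h => hrne (Prod.ext_iff.mpr ⟨h, hr2b'⟩)
    have hr1a' : (a : ℕ) < (r.1 : ℕ) := by
      have hne3 : (a : ℕ) ≠ (r.1 : ℕ) := fun h => hr1a (Fin.val_injective h.symm)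
      omega
    exact hC ⟨r.1, (hmemC r.1).mpr ⟨hr1a', by omega, by rw [← hr2b']; exact hrD⟩⟩

lemma face_isFace {n : ℕ} {D : Finset (Fin n × Fin n)}
    (hDiag : ∀ p ∈ D, IsDiag n p)
    (hNC : ∀ p ∈ D, ∀ q ∈ D, ¬ Crossing n p q)
    {a b : Fin n} (hab : (a, b) ∈ D) :
    IsFace n D (insert a (insert b (Mid n D a b))) := by
  classical
  have h2 : (a : ℕ) + 2 ≤ (b : ℕ) := gap2 hDiag hab
  set F := insert a (insert b (Mid n D a b)) with hFdef
  have hmemF : ∀ v : Fin n, v ∈ F ↔ v = a ∨ v = b ∨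
      ((a:ℕ) < (v:ℕ) ∧ (v:ℕ) < (b:ℕ) ∧ ¬ SepV n D a b v) := by
    intro v; simp [hFdef, mem_Mid]
  have haF : a ∈ F := (hmemF a).mpr (Or.inl rfl)
  have hbF : b ∈ F := (hmemF b).mpr (Or.inr (Or.inl rfl))
  have hrange : ∀ v ∈ F, (a:ℕ) ≤ (v:ℕ) ∧ (v:ℕ) ≤ (b:ℕ) := by
    intro v hv
    rcases (hmemF v).mp hv with rfl | rfl | ⟨h1, h2', _⟩ <;> omega
  have hkey : ∀ v ∈ F, ¬ SepV n D a b v := by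
    intro v hv hsep
    obtain ⟨r, hrD, hrne, g1, g2, g3, g4⟩ := hsep
    rcases (hmemF v).mp hv with rfl | rfl | ⟨_, _, hns⟩
    · omega
    · omega
    · exact hns ⟨r, hrD, hrne, g1, g2, g3, g4⟩
  refine ⟨?_, ?_, ?_⟩
  · -- card ≥ 3
    obtain ⟨v0, hv0⟩ := mid_nonempty hNC hab h2
    have habne : a ≠ b := fun h => by
      have := congrArg Fin.val h; omega
    have haM : a ∉ Mid n D a b := fun h => by have := (mem_Mid.mp h).1; omega
    have hbM : b ∉ Mid n D a b := fun h => by have := (mem_Mid.mp h).2.1; omega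
    have hains : a ∉ insert b (Mid n D a b) := by
      simp only [Finset.mem_insert]; push_neg; exact ⟨habne, haM⟩
    rw [hFdef, Finset.card_insert_of_notMem hains, Finset.card_insert_of_notMem hbM]
    have hpos : 0 < (Mid n D a b).card := Finset.card_pos.mpr ⟨v0, hv0⟩
    omega
  · -- consecutive vertices are connected
    intro u hu w hw hcons
    have hne : u ≠ w := hcons.2.2.1
    have hbtw := hcons.2.2.2
    have hnb : ∀ x ∈ F, ¬((u:ℕ) < (x:ℕ) ∧ (x:ℕ) < (w:ℕ)) ∧
        ¬((w:ℕ) < (u:ℕ) ∧ ((u:ℕ) < (x:ℕ) ∨ (x:ℕ) < (w:ℕ))) := by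
      intro x hx
      have hh := hbtw x hx
      simp only [CBtw, Fin.lt_def] at hh
      tauto
    have hneval : (u:ℕ) ≠ (w:ℕ) := fun h => hne (Fin.val_injective h)
    have hua : (a:ℕ) ≤ (u:ℕ) := (hrange u hu).1
    have hub : (u:ℕ) ≤ (b:ℕ) := (hrange u hu).2
    have haw : (a:ℕ) ≤ (w:ℕ) := (hrange w hw).1
    have hwb : (w:ℕ) ≤ (b:ℕ) := (hrange w hw).2
    rcases Nat.lt_or_ge (u:ℕ) (w:ℕ) with huw | hwu
    · -- forward case
      by_cases hside : (u:ℕ) + 1 = (w:ℕ)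
      · exact Or.inl (Or.inl hside)
      · obtain ⟨v1, hv1⟩ : ∃ v : Fin n, (v:ℕ) = (u:ℕ) + 1 :=
          ⟨⟨(u:ℕ)+1, by have := b.isLt; omega⟩, rfl⟩
        have hv1sep : SepV n D a b v1 := by
          by_contra hns
          have hv1F : v1 ∈ F := (hmemF v1).mpr (Or.inr (Or.inr ⟨by omega, by omega, hns⟩))
          exact (hnb v1 hv1F).1 ⟨by omega, by omega⟩
        obtain ⟨r, hrD, hrne, g1, g2, g3, g4⟩ := hv1sep
        have hr1u : r.1 = u := by
          rcases Nat.lt_or_ge (r.1:ℕ) (u:ℕ) with h | h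
          · exact absurd ⟨r, hrD, hrne, g1, h, by omega, g4⟩ (hkey u hu)
          · exact Fin.val_injective (by omega)
        set E : Finset (Fin n) :=
          Finset.univ.filter (fun d => (u, d) ∈ D ∧ (d:ℕ) ≤ (b:ℕ) ∧ (u, d) ≠ (a, b)) with hEdef
        have hmemE : ∀ d : Fin n, d ∈ E ↔ (u, d) ∈ D ∧ (d:ℕ) ≤ (b:ℕ) ∧ (u, d) ≠ (a, b) := by
          intro d; simp [hEdef]
        have hr2E : r.2 ∈ E := by
          rw [hmemE, ← hr1u]
          exact ⟨hrD, g4, hrne⟩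
        obtain ⟨d', hd'E, hmax⟩ := Finset.exists_max_image E (fun z => (z:ℕ)) ⟨r.2, hr2E⟩
        rw [hmemE] at hd'E
        obtain ⟨hud'D, hd'b, hud'ne⟩ := hd'E
        have hud' : (u:ℕ) + 2 ≤ (d':ℕ) := gap2 hDiag hud'D
        have hd'w : (d':ℕ) ≤ (w:ℕ) := by
          by_contra h
          exact (hkey w hw) ⟨(u, d'), hud'D, hud'ne, hua, huw,
            show (w:ℕ) < (d':ℕ) by omega, hd'b⟩
        rcases Nat.lt_or_ge (d':ℕ) (w:ℕ) with hlt | hge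
        · exfalso
          have hd'F : d' ∈ F := by
            rw [hmemF]
            refine Or.inr (Or.inr ⟨by omega, by omega, ?_⟩)
            rintro ⟨r', hr'D, hr'ne, k1, k2, k3, k4⟩
            have hncr := hNC (u, d') hud'D r' hr'D
            have hr'1u : (r'.1:ℕ) ≤ (u:ℕ) := by
              by_contra h
              exact hncr (Or.inl ⟨Fin.lt_def.mpr (show (u:ℕ) < (r'.1:ℕ) by omega),
                Fin.lt_def.mpr k2, Fin.lt_def.mpr k3⟩)
            rcases Nat.lt_or_ge (r'.1:ℕ) (u:ℕ) with h | h
            · exact (hkey u hu) ⟨r', hr'D, hr'ne, k1, h, by omega, k4⟩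
            · have heq : r'.1 = u := Fin.val_injective (by omega)
              have hr'2E : r'.2 ∈ E := by
                rw [hmemE, ← heq]
                exact ⟨hr'D, k4, hr'ne⟩
              have := hmax r'.2 hr'2E
              omega
          exact (hnb d' hd'F).1 ⟨by omega, hlt⟩
        · have heq : d' = w := Fin.val_injective (by omega)
          subst heq
          exact Or.inr (Or.inl hud'D)
    · -- backward case: u > w, so u = b and w = a
      have hwu' : (w:ℕ) < (u:ℕ) := by omega
      have h1 := (hnb b hbF).2
      have h2' := (hnb a haF).2
      have hub' : u = b := by
        apply Fin.val_injective
        by_contra h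
        exact h1 ⟨hwu', Or.inl (by omega)⟩
      have hwa' : w = a := by
        apply Fin.val_injective
        by_contra h
        exact h2' ⟨hwu', Or.inr (by omega)⟩
      subst hub'; subst hwa'
      exact Or.inr (Or.inr hab)
  · -- diagonals inside F are consecutive
    intro q hq h1 h2'
    by_cases hqab : q = (a, b)
    · right
      subst hqab
      refine ⟨hbF, haF, fun h => ?_, ?_⟩
      · have := congrArg Fin.val h; simp at this; omega
      · intro x hx
        have hr := hrange x hx
        simp only [CBtw, Fin.lt_def]
        omega
    · left
      have hlt := gap2 hDiag hq
      refine ⟨h1, h2', fun h => by have := congrArg Fin.val h; omega, ?_⟩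
      intro x hx
      simp only [CBtw, Fin.lt_def]
      rintro (⟨k1, k2⟩ | ⟨k1, _⟩)
      · exact (hkey x hx) ⟨q, hq, hqab, (hrange q.1 h1).1, k1, k2, (hrange q.2 h2').2⟩
      · omega


/-- In any quadrangulation of a convex polygon with vertices labeled `0, 1, …, n-1`
cyclically (`n` even), every diagonal joins two vertices of opposite parity. -/
theorem quadrangulation_diag_opposite_parity (n : ℕ) (he : Even n)
    (D : Finset (Fin n × Fin n)) (hD : IsQuadrangulation n D)
    (p : Fin n × Fin n) (hp : p ∈ D) :
    Odd ((p.1 : ℕ) + (p.2 : ℕ)) := by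
  classical
  have hDiag : ∀ q ∈ D, IsDiag n q := hD.1.1
  have hNC : ∀ q ∈ D, ∀ r ∈ D, ¬ Crossing n q r := hD.1.2
  have hF4 : ∀ F : Finset (Fin n), IsFace n D F → F.card = 4 := hD.2
  suffices h : ∀ k : ℕ, ∀ q ∈ D, (q.2 : ℕ) - (q.1 : ℕ) ≤ k → Odd ((q.1 : ℕ) + (q.2 : ℕ)) by
    exact h _ p hp le_rfl
  intro k
  induction k with
  | zero =>
    intro q hq hle
    exfalso
    have := gap2 hDiag hq
    omega
  | succ k ih =>
    intro q hq hle
    have hg := gap2 hDiag hq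
    rcases Nat.lt_or_ge ((q.2:ℕ) - (q.1:ℕ)) (k+1) with hlt | hge
    · exact ih q hq (by omega)
    have hq' : (q.1, q.2) ∈ D := hq
    set a := q.1 with hadef
    set b := q.2 with hbdef
    have hbn : (b : ℕ) < n := b.isLt
    show Odd ((a:ℕ) + (b:ℕ))
    have hface := face_isFace hDiag hNC hq'
    have hcard := hF4 _ hface
    set M := Mid n D a b with hMdef
    have haM : a ∉ M := fun h => by have := (mem_Mid.mp h).1; omega
    have hbM : b ∉ M := fun h => by have := (mem_Mid.mp h).2.1; omega
    have habne : a ≠ b := fun h => by have := congrArg Fin.val h; omega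
    have hains : a ∉ insert b M := by
      simp only [Finset.mem_insert]; push_neg; exact ⟨habne, haM⟩
    have hM2 : M.card = 2 := by
      rw [Finset.card_insert_of_notMem hains, Finset.card_insert_of_notMem hbM] at hcard
      omega
    obtain ⟨x, y, hxyne, hMeq⟩ := Finset.card_eq_two.mp hM2
    have hxyne' : (x:ℕ) ≠ (y:ℕ) := fun h => hxyne (Fin.val_injective h)
    have main : ∀ x y : Fin n, (x:ℕ) < (y:ℕ) → M = {x, y} → Odd ((a:ℕ) + (b:ℕ)) := by
      clear hxyne hxyne' hMeq
      intro x y hxy hMeq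
      have hxM : x ∈ M := by rw [hMeq]; simp
      have hyM : y ∈ M := by rw [hMeq]; simp
      obtain ⟨hax, hxb, hxns⟩ := mem_Mid.mp hxM
      obtain ⟨hay, hyb, hyns⟩ := mem_Mid.mp hyM
      have hmemF : ∀ z : Fin n, z ∈ insert a (insert b M) →
          z = a ∨ z = b ∨ z = x ∨ z = y := by
        intro z hz
        rw [hMeq] at hz
        simpa using hz
      have haF : a ∈ insert a (insert b M) := by simp
      have hbF : b ∈ insert a (insert b M) := by simp
      have hxF : x ∈ insert a (insert b M) := by simp [hMeq]
      have hyF : y ∈ insert a (insert b M) := by simp [hMeq]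
      have hconn := hface.2.1
      have hc1 : Conn n D a x := by
        refine hconn a haF x hxF
          ⟨haF, hxF, fun h => by have := congrArg Fin.val h; omega, ?_⟩
        intro z hz
        rcases hmemF z hz with rfl | rfl | rfl | rfl <;>
          (simp only [CBtw, Fin.lt_def]; omega)
      have hc2 : Conn n D x y := by
        refine hconn x hxF y hyF
          ⟨hxF, hyF, fun h => by have := congrArg Fin.val h; omega, ?_⟩
        intro z hz
        rcases hmemF z hz with rfl | rfl | rfl | rfl <;>
          (simp only [CBtw, Fin.lt_def]; omega)
      have hc3 : Conn n D y b := by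
        refine hconn y hyF b hbF
          ⟨hyF, hbF, fun h => by have := congrArg Fin.val h; omega, ?_⟩
        intro z hz
        rcases hmemF z hz with rfl | rfl | rfl | rfl <;>
          (simp only [CBtw, Fin.lt_def]; omega)
      have ed : ∀ u w : Fin n, (a:ℕ) ≤ (u:ℕ) → (u:ℕ) < (w:ℕ) → (w:ℕ) ≤ (b:ℕ) →
          ((a:ℕ) < (u:ℕ) ∨ (w:ℕ) < (b:ℕ)) → ((w:ℕ) - (u:ℕ) ≤ k) →
          Conn n D u w → ((u:ℕ) + (w:ℕ)) % 2 = 1 := by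
        intro u w hau huw hwb hor hk hc
        have hc' : IsSide n u w ∨ (u, w) ∈ D ∨ (w, u) ∈ D := hc
        rcases hc' with hs | hd | hd
        · have hs' : (u:ℕ) + 1 = (w:ℕ) ∨ (w:ℕ) + 1 = (u:ℕ) ∨
              ((u:ℕ) = 0 ∧ (w:ℕ) = n - 1) ∨ ((w:ℕ) = 0 ∧ (u:ℕ) = n - 1) := hs
          omega
        · have hodd := ih (u, w) hd hk
          rw [Nat.odd_iff] at hodd
          exact hodd
        · have h5 : (w:ℕ) + 2 ≤ (u:ℕ) := gap2 hDiag hd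
          omega
      have e1 : ((a:ℕ) + (x:ℕ)) % 2 = 1 :=
        ed a x le_rfl hax (by omega) (Or.inr hxb) (by omega) hc1
      have e2 : ((x:ℕ) + (y:ℕ)) % 2 = 1 :=
        ed x y (by omega) hxy (by omega) (Or.inl hax) (by omega) hc2
      have e3 : ((y:ℕ) + (b:ℕ)) % 2 = 1 :=
        ed y b (by omega) hyb le_rfl (Or.inl (by omega)) (by omega) hc3
      rw [Nat.odd_iff]
      omega
    rcases Nat.lt_or_gt_of_ne hxyne' with h | h
    · exact main x y h hMeq
    · exact main y x h (by rw [hMeq, Finset.pair_comm])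
end

section
/- Let C be a non-crossing perfect matching (chord diagram) on indices {0,1,…,n−3} (n even). Define the region R_C of points (x_0,…,x_{n−3}) ∈ ℝ^{n−2} by: x_a = x_b for each chord {a,b} of C, and x_a < x_c whenever chord {a,b} surrounds chord {c,d}. Then for every point x in R_C, H(x) = 0, where H(x) = Σ_{a=0}^{n−3} x_a + 2·Σ_{a=0}^{n−4} Σ_{b=a+1}^{n−3} (−1)^{b−a}·min(x_a,…,x_b). -/
/-!
Take a chord `(i, j)` of the diagram on which `x` is largest. A chord nested inside it would
carry a strictly larger value, and no chord crosses it, so `j = i + 1`: the diagram has a short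
chord, and `x_i = x_{i+1}` is the maximum of `x`. Deleting two adjacent equal maximal coordinates
does not change `H`. Write `H = 2 G - Σ x_a` with `G = Σ_{a ≤ b} (-1)^(b-a) min(x_a, …, x_b)`.
In `G` the windows `[a, i]` and `[a, i + 1]` with `a < i` cancel, the windows starting at `i` and
at `i + 1` add up to `x_i`, and every other window keeps its minimum and the parity of its length
once the two coordinates are deleted; so `G` drops by `x_i` and `Σ x_a` by `2 x_i`.
Deleting the short chord leaves a point in the region of a smaller non-crossing diagram, so
`H = 0` follows by induction.
-/

open Finset

def skipTwo (i j : ℕ) : ℕ := if j < i then j else j + 2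

lemma skipTwo_strictMono (i : ℕ) : StrictMono (skipTwo i) := by
  intro a b h
  unfold skipTwo
  split_ifs <;> omega

lemma skipTwo_succ {i b : ℕ} (h : b + 1 ≠ i) : skipTwo i (b + 1) = skipTwo i b + 1 := by
  unfold skipTwo
  split_ifs <;> omega

lemma skipTwo_ne (i j : ℕ) : skipTwo i j ≠ i ∧ skipTwo i j ≠ i + 1 := by
  unfold skipTwo
  split_ifs <;> omega

lemma exists_skipTwo_eq {i k : ℕ} (h₀ : k ≠ i) (h₁ : k ≠ i + 1) : ∃ j, skipTwo i j = k :=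
  ⟨if k < i then k else k - 2, by unfold skipTwo; split_ifs <;> omega⟩

lemma skipTwo_lt_add_two_iff {i m j : ℕ} (him : i ≤ m) : skipTwo i j < m + 2 ↔ j < m := by
  unfold skipTwo
  split_ifs <;> omega

lemma neg_one_pow_skipTwo_sub {R : Type*} [Monoid R] [HasDistribNeg R] {i a b : ℕ} (h : a ≤ b) :
    (-1 : R) ^ (skipTwo i b - skipTwo i a) = (-1) ^ (b - a) := by
  obtain h | h : skipTwo i b - skipTwo i a = b - a ∨ skipTwo i b - skipTwo i a = b - a + 2 := by
    unfold skipTwo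
    split_ifs <;> omega
  all_goals simp [h, pow_add]

lemma sum_Ico_add_two_eq_sum_skipTwo {M : Type*} [AddCommMonoid M] (f : ℕ → M) {i a m : ℕ}
    (h : i ≤ a) : ∑ b ∈ Ico (a + 2) (m + 2), f b = ∑ b ∈ Ico a m, f (skipTwo i b) := by
  rw [← sum_Ico_add' f a m 2]
  refine sum_congr rfl fun b hb => ?_
  rw [skipTwo, if_neg (by simp only [mem_Ico] at hb; omega)]

lemma sum_Ico_eq_add_sum_skipTwo {M : Type*} [AddCommMonoid M] (f : ℕ → M) {a i m : ℕ}
    (hai : a ≤ i) (him : i ≤ m) :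
    ∑ b ∈ Ico a (m + 2), f b = f i + f (i + 1) + ∑ b ∈ Ico a m, f (skipTwo i b) := by
  have hhead : ∑ b ∈ Ico a i, f (skipTwo i b) = ∑ b ∈ Ico a i, f b :=
    sum_congr rfl fun b hb => by rw [skipTwo, if_pos (mem_Ico.1 hb).2]
  rw [← sum_Ico_consecutive f hai (by omega : i ≤ m + 2),
    sum_eq_sum_Ico_succ_bot (show i < m + 2 by omega),
    sum_eq_sum_Ico_succ_bot (show i + 1 < m + 2 by omega), sum_Ico_add_two_eq_sum_skipTwo f le_rfl,
    ← sum_Ico_consecutive _ hai him, hhead]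
  abel

section wmin

variable (x : ℕ → ℝ)

lemma wmin_self (a : ℕ) : wmin x a a = x a := by
  simp [wmin]

lemma wmin_le_s17 {a j b : ℕ} (h₁ : a ≤ j) (h₂ : j ≤ b) : wmin x a b ≤ x j :=
  csInf_le ((Set.finite_Icc a b).image x).bddBelow ⟨j, ⟨h₁, h₂⟩, rfl⟩

lemma wmin_succ_right {a b : ℕ} (h : a ≤ b) :
    wmin x a (b + 1) = min (wmin x a b) (x (b + 1)) := by
  have hs : Set.Icc a (b + 1) = Set.Icc a b ∪ {b + 1} := by
    ext j
    simp only [Set.mem_Icc, Set.mem_union, Set.mem_singleton_iff]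
    omega
  rw [wmin, hs, Set.image_union, Set.image_singleton,
    csInf_union ((Set.finite_Icc a b).image x).bddBelow ((Set.nonempty_Icc.2 h).image x)
      bddBelow_singleton (Set.singleton_nonempty _), csInf_singleton, wmin]

lemma wmin_succ_right_of_le {a b : ℕ} (hab : a ≤ b) (h : wmin x a b ≤ x (b + 1)) :
    wmin x a (b + 1) = wmin x a b := by
  rw [wmin_succ_right x hab, min_eq_left h]

lemma wmin_eq_min_left {a b : ℕ} (h : a < b) : wmin x a b = min (x a) (wmin x (a + 1) b) := by
  induction b, h using Nat.le_induction with
  | base => rw [wmin_succ_right x le_rfl, wmin_self, wmin_self]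
  | succ b hb ih => rw [wmin_succ_right x (by omega), wmin_succ_right x hb, ih, min_assoc]

end wmin

/-- Since `y (i - 1) ≤ y i = y (i + 1)`, deleting `y i` and `y (i + 1)` does not change the
minimum of a window that also contains `i - 1`. -/
lemma wmin_comp_skipTwo {y : ℕ → ℝ} {i a b : ℕ} (hv : y (i + 1) = y i) (hle : y (i - 1) ≤ y i)
    (hab : a ≤ b) : wmin (y ∘ skipTwo i) a b = wmin y (skipTwo i a) (skipTwo i b) := by
  have hs := (skipTwo_strictMono i).monotone
  induction b, hab using Nat.le_induction with
  | base => simp only [wmin_self, Function.comp_apply]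
  | succ b hab ih =>
    rw [wmin_succ_right _ hab, ih, Function.comp_apply]
    by_cases hbi : b + 1 = i
    · subst hbi
      rw [Nat.add_sub_cancel] at hle
      have hsb : skipTwo (b + 1) b = b := if_pos (by omega)
      have hsb' : skipTwo (b + 1) (b + 1) = b + 2 + 1 := if_neg (by omega)
      have hab' : skipTwo (b + 1) a ≤ b := (hs hab).trans_eq hsb
      have hmin : wmin y (skipTwo (b + 1) a) b ≤ y (b + 1) := (wmin_le_s17 y hab' le_rfl).trans hle
      have hw : wmin y (skipTwo (b + 1) a) (b + 2) = wmin y (skipTwo (b + 1) a) b := by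
        rw [wmin_succ_right_of_le _ (by omega), wmin_succ_right_of_le _ hab' hmin]
        rw [wmin_succ_right_of_le _ hab' hmin, hv]
        exact hmin
      rw [hsb, hsb', wmin_succ_right _ (by omega : skipTwo (b + 1) a ≤ b + 2), hw]
    · rw [skipTwo_succ hbi, wmin_succ_right _ (hs hab)]

noncomputable def altMinRow (N : ℕ) (x : ℕ → ℝ) (a : ℕ) : ℝ :=
  ∑ b ∈ Ico a N, (-1 : ℝ) ^ (b - a) * wmin x a b

noncomputable def altMinSum (N : ℕ) (x : ℕ → ℝ) : ℝ :=
  ∑ a ∈ range N, altMinRow N x a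

lemma altMinRow_eq_add {N : ℕ} (x : ℕ → ℝ) {a : ℕ} (h : a < N) :
    altMinRow N x a = x a + ∑ b ∈ Ico (a + 1) N, (-1 : ℝ) ^ (b - a) * wmin x a b := by
  rw [altMinRow, sum_eq_sum_Ico_succ_bot h, Nat.sub_self, pow_zero, one_mul, wmin_self]

lemma Hfun_eq_two_mul_altMinSum_sub (N : ℕ) (x : ℕ → ℝ) :
    Hfun N x = 2 * altMinSum N x - ∑ a ∈ range N, x a := by
  rw [Hfun, altMinSum, sum_congr rfl fun a ha => altMinRow_eq_add x (mem_range.1 ha),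
    sum_add_distrib]
  ring

lemma altMinRow_add_altMinRow_succ {N : ℕ} {x : ℕ → ℝ} {a : ℕ} (ha : a < N)
    (h : x (a + 1) ≤ x a) : altMinRow N x a + altMinRow N x (a + 1) = x a := by
  rw [altMinRow_eq_add x ha, altMinRow, add_assoc, ← sum_add_distrib, add_eq_left]
  refine sum_eq_zero fun b hb => ?_
  have hab : a + 1 ≤ b := (mem_Ico.1 hb).1
  rw [wmin_eq_min_left x (by omega), min_eq_right ((wmin_le_s17 x le_rfl hab).trans h),
    show b - a = b - (a + 1) + 1 by omega, pow_succ]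
  ring

section DeletePair

variable {y : ℕ → ℝ} {i m : ℕ}

lemma altMinRow_skipTwo (him : i ≤ m) (hv : y (i + 1) = y i) (hle : y (i - 1) ≤ y i) (a : ℕ) :
    altMinRow (m + 2) y (skipTwo i a) = altMinRow m (y ∘ skipTwo i) a := by
  have hterm : ∀ b ∈ Ico a m, (-1 : ℝ) ^ (skipTwo i b - skipTwo i a) *
      wmin y (skipTwo i a) (skipTwo i b) = (-1) ^ (b - a) * wmin (y ∘ skipTwo i) a b :=
    fun b hb => by
      have hab := (mem_Ico.1 hb).1
      rw [neg_one_pow_skipTwo_sub hab, wmin_comp_skipTwo hv hle hab]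
  rw [altMinRow, altMinRow, ← sum_congr rfl hterm]
  by_cases hai : a < i
  · have hcancel : (-1 : ℝ) ^ (i - a) * wmin y a i + (-1) ^ (i + 1 - a) * wmin y a (i + 1) = 0 := by
      rw [wmin_succ_right_of_le y hai.le (hv ▸ wmin_le_s17 y hai.le le_rfl),
        show i + 1 - a = i - a + 1 by omega, pow_succ]
      ring
    rw [show skipTwo i a = a from if_pos hai, sum_Ico_eq_add_sum_skipTwo _ hai.le him, hcancel,
      zero_add]
  · rw [show skipTwo i a = a + 2 from if_neg hai]
    exact sum_Ico_add_two_eq_sum_skipTwo _ (not_lt.1 hai)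

lemma altMinSum_add_two (him : i ≤ m) (hv : y (i + 1) = y i) (hle : y (i - 1) ≤ y i) :
    altMinSum (m + 2) y = y i + altMinSum m (y ∘ skipTwo i) := by
  rw [altMinSum, range_eq_Ico, sum_Ico_eq_add_sum_skipTwo _ (Nat.zero_le i) him,
    altMinRow_add_altMinRow_succ (by omega) hv.le, altMinSum, range_eq_Ico]
  exact congrArg _ (sum_congr rfl fun a _ => altMinRow_skipTwo him hv hle a)

theorem Hfun_add_two_eq_comp_skipTwo (him : i ≤ m) (hv : y (i + 1) = y i)
    (hle : y (i - 1) ≤ y i) :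
    Hfun (m + 2) y = Hfun m (y ∘ skipTwo i) := by
  have hsum := sum_Ico_eq_add_sum_skipTwo y (Nat.zero_le i) him
  rw [← range_eq_Ico, ← range_eq_Ico, hv] at hsum
  rw [Hfun_eq_two_mul_altMinSum_sub, Hfun_eq_two_mul_altMinSum_sub, altMinSum_add_two him hv hle,
    hsum]
  simp only [Function.comp_apply]
  ring

end DeletePair

/-- The region `R_C` of the chord diagram `M`. -/
def region {α : Type*} [LT α] (M : Finset (ℕ × ℕ)) : Set (ℕ → α) :=
  {x | (∀ p ∈ M, x p.1 = x p.2) ∧ ∀ p ∈ M, ∀ q ∈ M, p.1 < q.1 → q.2 < p.2 → x p.1 < x q.1}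

noncomputable def chordPullback (s : ℕ → ℕ) (hs : s.Injective) (M : Finset (ℕ × ℕ)) :
    Finset (ℕ × ℕ) :=
  M.preimage (Prod.map s s) (hs.prodMap hs).injOn

lemma mem_chordPullback {s : ℕ → ℕ} {hs : s.Injective} {M : Finset (ℕ × ℕ)} {q : ℕ × ℕ} :
    q ∈ chordPullback s hs M ↔ (s q.1, s q.2) ∈ M :=
  mem_preimage

lemma comp_mem_region_chordPullback {α : Type*} [Preorder α] {M : Finset (ℕ × ℕ)}
    {x : ℕ → α} {s : ℕ → ℕ} (hs : StrictMono s) (hx : x ∈ region M) :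
    x ∘ s ∈ region (chordPullback s hs.injective M) :=
  ⟨fun _ hp => hx.1 _ (mem_chordPullback.1 hp), fun _ hp _ hq h₁ h₂ =>
    hx.2 _ (mem_chordPullback.1 hp) _ (mem_chordPullback.1 hq) (hs h₁) (hs h₂)⟩

namespace IsNCMatchingN

variable {N : ℕ} {M : Finset (ℕ × ℕ)}

lemma eq_of_endpoint (hM : IsNCMatchingN N M) {p q : ℕ × ℕ} {j : ℕ} (hp : p ∈ M) (hq : q ∈ M)
    (hpj : p.1 = j ∨ p.2 = j) (hqj : q.1 = j ∨ q.2 = j) : p = q := by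
  have hj : j < N := by have := hM.1 p hp; omega
  exact (hM.2.1 j hj).unique ⟨hp, hpj⟩ ⟨hq, hqj⟩

lemma le_of_forall_fst_le {α : Type*} [Preorder α] (hM : IsNCMatchingN N M) {x : ℕ → α}
    (heq : ∀ p ∈ M, x p.1 = x p.2) {c : α} (hc : ∀ p ∈ M, x p.1 ≤ c) {j : ℕ} (hj : j < N) :
    x j ≤ c := by
  obtain ⟨p, ⟨hp, rfl | rfl⟩, -⟩ := hM.2.1 j hj
  · exact hc p hp
  · exact heq p hp ▸ hc p hp

lemma snd_eq_succ_of_forall_le {α : Type*} [Preorder α] (hM : IsNCMatchingN N M) {x : ℕ → α}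
    (hlt : ∀ p ∈ M, ∀ q ∈ M, p.1 < q.1 → q.2 < p.2 → x p.1 < x q.1) {p : ℕ × ℕ} (hp : p ∈ M)
    (hmax : ∀ q ∈ M, x q.1 ≤ x p.1) : p.2 = p.1 + 1 := by
  obtain ⟨hp12, hp2⟩ := hM.1 p hp
  by_contra hne
  obtain ⟨q, ⟨hq, hqj⟩, -⟩ := hM.2.1 (p.1 + 1) (by omega)
  have hq12 := (hM.1 q hq).1
  rcases hqj with hq1 | hq2
  · rcases lt_trichotomy q.2 p.2 with h | h | h
    · exact lt_irrefl _ ((hlt p hp q hq (by omega) h).trans_le (hmax q hq))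
    · have hqp := hM.eq_of_endpoint hq hp (Or.inr h) (Or.inr rfl)
      rw [hqp] at hq1
      omega
    · exact hM.2.2 p hp q hq ⟨by omega, by omega, h⟩
  · rcases (show q.1 < p.1 ∨ q.1 = p.1 by omega) with h | h
    · exact hM.2.2 q hq p hp ⟨h, by omega, by omega⟩
    · have hqp := hM.eq_of_endpoint hq hp (Or.inl h) (Or.inl rfl)
      rw [hqp] at hq2
      exact hne hq2

lemma chordPullback_skipTwo {m i : ℕ} (hM : IsNCMatchingN (m + 2) M) (hi : (i, i + 1) ∈ M) :
    IsNCMatchingN m (chordPullback (skipTwo i) (skipTwo_strictMono i).injective M) := by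
  have hs := skipTwo_strictMono i
  have him : i ≤ m := by have := (hM.1 _ hi).2; omega
  have hcover : ∀ p ∈ M, p ≠ (i, i + 1) → ∀ k, (p.1 = k ∨ p.2 = k) → ∃ u, skipTwo i u = k :=
    fun p hp hne k hk => exists_skipTwo_eq
      (fun h => hne (hM.eq_of_endpoint hp hi (h ▸ hk) (Or.inl rfl)))
      (fun h => hne (hM.eq_of_endpoint hp hi (h ▸ hk) (Or.inr rfl)))
  refine ⟨fun p hp => ?_, fun j hj => ?_, fun p hp q hq h => ?_⟩
  · obtain ⟨h₁, h₂⟩ := hM.1 _ (mem_chordPullback.1 hp)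
    exact ⟨hs.lt_iff_lt.1 h₁, (skipTwo_lt_add_two_iff him).1 h₂⟩
  · obtain ⟨q, ⟨hq, hqj⟩, -⟩ := hM.2.1 (skipTwo i j) ((skipTwo_lt_add_two_iff him).2 hj)
    have hne : q ≠ (i, i + 1) := by
      rintro rfl
      have := skipTwo_ne i j
      omega
    obtain ⟨u, hu⟩ := hcover q hq hne q.1 (Or.inl rfl)
    obtain ⟨v, hv⟩ := hcover q hq hne q.2 (Or.inr rfl)
    have hquv : (skipTwo i u, skipTwo i v) = q := by rw [hu, hv]
    refine ⟨(u, v), ⟨mem_chordPullback.2 (hquv ▸ hq), ?_⟩, fun r ⟨hr, hrj⟩ => ?_⟩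
    · rw [← hu, ← hv] at hqj
      exact hqj.imp (fun h => hs.injective h) (fun h => hs.injective h)
    · have hrq := hM.eq_of_endpoint (mem_chordPullback.1 hr) hq
        (hrj.imp (congrArg (skipTwo i)) (congrArg (skipTwo i))) hqj
      rw [← hquv, Prod.mk.injEq] at hrq
      exact Prod.ext (hs.injective hrq.1) (hs.injective hrq.2)
  · exact hM.2.2 _ (mem_chordPullback.1 hp) _ (mem_chordPullback.1 hq) ⟨hs h.1, hs h.2.1, hs h.2.2⟩

end IsNCMatchingN

theorem Hfun_eq_zero_of_mem_region {N : ℕ} {M : Finset (ℕ × ℕ)} {x : ℕ → ℝ}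
    (hM : IsNCMatchingN N M) (hx : x ∈ region M) : Hfun N x = 0 := by
  induction N using Nat.strong_induction_on generalizing M x with
  | _ N ih =>
    rcases N.eq_zero_or_pos with rfl | hN
    · simp [Hfun]
    obtain ⟨p₀, ⟨hp₀, -⟩, -⟩ := hM.2.1 0 hN
    obtain ⟨⟨i, j⟩, hp, hmax⟩ := M.exists_max_image (fun q => x q.1) ⟨p₀, hp₀⟩
    obtain rfl : j = i + 1 := hM.snd_eq_succ_of_forall_le hx.2 hp hmax
    have hiN := (hM.1 _ hp).2
    obtain ⟨m, rfl⟩ : ∃ m, N = m + 2 := ⟨N - 2, by omega⟩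
    have hle : x (i - 1) ≤ x i := hM.le_of_forall_fst_le hx.1 hmax (by omega)
    rw [Hfun_add_two_eq_comp_skipTwo (by omega) (hx.1 _ hp).symm hle]
    exact ih m (by omega) (hM.chordPullback_skipTwo hp)
      (comp_mem_region_chordPullback (skipTwo_strictMono i) hx)

theorem Hfun_eq_zero_on_region_general (n : ℕ)
    (M : Finset (ℕ × ℕ)) (hM : IsNCMatchingN (n - 2) M) (x : ℕ → ℝ)
    (heq : ∀ p ∈ M, x p.1 = x p.2)
    (hlt : ∀ p ∈ M, ∀ q ∈ M, p.1 < q.1 → q.2 < p.2 → x p.1 < x q.1) :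
    Hfun (n - 2) x = 0 :=
  Hfun_eq_zero_of_mem_region hM ⟨heq, hlt⟩

/-- Let `C` be a non-crossing chord diagram on indices `{0, 1, …, n-3}` (`n` even), and
let `x` lie in the region `R_C`: `x_a = x_b` for each chord `{a,b}` of `C`, and
`x_a < x_c` whenever chord `{a,b}` surrounds chord `{c,d}`. Then `H(x) = 0`. -/
theorem Hfun_eq_zero_on_region (n : ℕ) (hn : 4 ≤ n) (he : Even n)
    (M : Finset (ℕ × ℕ)) (hM : IsNCMatchingN (n - 2) M) (x : ℕ → ℝ)
    (heq : ∀ p ∈ M, x p.1 = x p.2)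
    (hlt : ∀ p ∈ M, ∀ q ∈ M, p.1 < q.1 → q.2 < p.2 → x p.1 < x q.1) :
    Hfun (n - 2) x = 0 :=
  Hfun_eq_zero_on_region_general n M hM x heq hlt
end

section
/- For distinct chords in a non-crossing perfect matching of a linearly ordered set, if a chord {a,b} (a<b) surrounds chord {c,d} (c<d), then the number of matched points strictly between a and c is even, and likewise the number strictly between d and b is even. -/
/-- A finset with a fixed-point-free involution has even cardinality. -/
lemma even_card_of_involution (s : Finset ℕ) (f : ℕ → ℕ)
    (hmem : ∀ i ∈ s, f i ∈ s) (hinv : ∀ i ∈ s, f (f i) = i)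
    (hne : ∀ i ∈ s, f i ≠ i) : Even s.card := by
  induction s using Finset.strongInduction with
  | _ s ih =>
    rcases s.eq_empty_or_nonempty with rfl | ⟨i, hi⟩
    · simp
    · have hfi : f i ∈ s := hmem i hi
      have hfine : f i ≠ i := hne i hi
      set t := (s.erase i).erase (f i) with ht
      have hss : t ⊆ s := (Finset.erase_subset _ _).trans (Finset.erase_subset _ _)
      have hit : i ∉ t := by simp [ht]
      have hts : t ⊂ s := (Finset.ssubset_iff_of_subset hss).mpr ⟨i, hi, hit⟩
      have key : ∀ j ∈ t, f j ∈ t := by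
        intro j hj
        have hjs : j ∈ s := hss hj
        have hji : j ≠ i := by
          intro h; rw [ht, h] at hj
          exact (Finset.notMem_erase i _) (Finset.erase_subset _ _ hj)
        have hjfi : j ≠ f i := by
          intro h; rw [ht, h] at hj; exact (Finset.notMem_erase (f i) _) hj
        have h1 : f j ≠ f i := by
          intro h
          have h' : f (f j) = f (f i) := by rw [h]
          rw [hinv j hjs, hinv i hi] at h'
          exact hji h'
        have h2 : f j ≠ i := by
          intro h
          have h' : f (f j) = f i := by rw [h]
          rw [hinv j hjs] at h'
          exact hjfi h'
        rw [ht]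
        exact Finset.mem_erase.mpr ⟨h1, Finset.mem_erase.mpr ⟨h2, hmem j hjs⟩⟩
      have heven : Even t.card :=
        ih t hts key (fun j hj => hinv j (hss hj)) (fun j hj => hne j (hss hj))
      have hfimem : f i ∈ s.erase i := Finset.mem_erase.mpr ⟨hfine, hfi⟩
      have hc1 : (s.erase i).card + 1 = s.card := Finset.card_erase_add_one hi
      have hc2 : t.card + 1 = (s.erase i).card := Finset.card_erase_add_one hfimem
      obtain ⟨k, hk⟩ := heven
      exact ⟨k + 1, by omega⟩

/-- If every chord with an endpoint strictly between `lo` and `hi` has both endpoints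
strictly between `lo` and `hi`, then the number of points strictly between is even. -/
lemma even_gap (m : ℕ) (M : Finset (ℕ × ℕ))
    (hb : ∀ r ∈ M, r.1 < r.2)
    (hcov : ∀ i < m, ∃! p : ℕ × ℕ, p ∈ M ∧ (p.1 = i ∨ p.2 = i))
    (lo hi : ℕ) (hhi : hi ≤ m)
    (spread : ∀ r ∈ M, ∀ i, lo < i → i < hi → (r.1 = i ∨ r.2 = i) →
      (lo < r.1 ∧ r.1 < hi) ∧ (lo < r.2 ∧ r.2 < hi)) :
    Even (hi - lo - 1) := by
  have hcov' : ∀ i, ∃ r : ℕ × ℕ, i < m → r ∈ M ∧ (r.1 = i ∨ r.2 = i) := by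
    intro i
    by_cases h : i < m
    · exact ⟨(hcov i h).exists.choose, fun _ => (hcov i h).exists.choose_spec⟩
    · exact ⟨(0, 0), fun h' => absurd h' h⟩
  choose F hF using hcov'
  let f : ℕ → ℕ := fun i => if (F i).1 = i then (F i).2 else (F i).1
  have hfdef : ∀ j, f j = if (F j).1 = j then (F j).2 else (F j).1 := fun _ => rfl
  have hcard : (Finset.Ioo lo hi).card = hi - lo - 1 := Nat.card_Ioo lo hi
  rw [← hcard]
  apply even_card_of_involution (f := f)
  · -- membership
    intro i hi'
    obtain ⟨h1, h2⟩ := Finset.mem_Ioo.mp hi'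
    have him : i < m := by omega
    have hspr := spread (F i) (hF i him).1 i h1 h2 (hF i him).2
    rw [hfdef]
    split
    · exact Finset.mem_Ioo.mpr hspr.2
    · exact Finset.mem_Ioo.mpr hspr.1
  · -- involution
    intro i hi'
    obtain ⟨h1, h2⟩ := Finset.mem_Ioo.mp hi'
    have him : i < m := by omega
    have hspr := spread (F i) (hF i him).1 i h1 h2 (hF i him).2
    have hlt := hb (F i) (hF i him).1
    have hfim : f i < m := by
      rw [hfdef]; split <;> omega
    have hendfi : (F i).1 = f i ∨ (F i).2 = f i := by
      rw [hfdef]; split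
      · exact Or.inr rfl
      · exact Or.inl rfl
    have huniq : F (f i) = F i := (hcov (f i) hfim).unique
      ⟨(hF (f i) hfim).1, (hF (f i) hfim).2⟩ ⟨(hF i him).1, hendfi⟩
    rcases (hF i him).2 with he | he
    · have hfival : f i = (F i).2 := by rw [hfdef, if_pos he]
      rw [hfdef (f i), huniq, if_neg (by omega), he]
    · have hne1 : (F i).1 ≠ i := by omega
      have hfival : f i = (F i).1 := by rw [hfdef, if_neg hne1]
      rw [hfdef (f i), huniq, if_pos hfival.symm, he]
  · -- no fixed point
    intro i hi'
    obtain ⟨h1, h2⟩ := Finset.mem_Ioo.mp hi'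
    have him : i < m := by omega
    have hlt := hb (F i) (hF i him).1
    rw [hfdef]
    split
    · omega
    · rcases (hF i him).2 with he | he
      · omega
      · omega

/-- In a non-crossing perfect matching of the points `0, …, m-1` on a line, if a chord
`{a,b}` (with `a < b`) surrounds a chord `{c,d}` (with `c < d`) directly (no chord of the
matching is nested strictly between them), then the number of matched points strictly
between `a` and `c` is even, and likewise the number strictly between `d` and `b` is even. -/
theorem gaps_even_of_surrounds (m : ℕ) (M : Finset (ℕ × ℕ)) (hM : IsNCMatchingN m M)
    (p q : ℕ × ℕ) (hp : p ∈ M) (hq : q ∈ M)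
    (hsur : p.1 < q.1 ∧ q.2 < p.2)
    (himm : ¬ ∃ r ∈ M, p.1 < r.1 ∧ r.1 < q.1 ∧ q.2 < r.2 ∧ r.2 < p.2) :
    Even (q.1 - p.1 - 1) ∧ Even (p.2 - q.2 - 1) := by
  obtain ⟨hbound, hcov, hcross⟩ := hM
  push_neg at himm
  have hb : ∀ r ∈ M, r.1 < r.2 := fun r hr => (hbound r hr).1
  obtain ⟨hab, hbm⟩ := hbound p hp
  obtain ⟨hcd, hdm⟩ := hbound q hq
  obtain ⟨hac, hdb⟩ := hsur
  -- uniqueness of the chord at a point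
  have huni : ∀ i, i < m → ∀ r ∈ M, (r.1 = i ∨ r.2 = i) → ∀ s ∈ M, (s.1 = i ∨ s.2 = i) →
      r = s := by
    intro i h r hr her s hs hes
    exact (hcov i h).unique ⟨hr, her⟩ ⟨hs, hes⟩
  constructor
  · -- gap (p.1, q.1)
    apply even_gap m M hb hcov p.1 q.1 (by omega)
    intro r hr i h1 h2 hei
    have hrlt := hb r hr
    rcases hei with he | he
    · -- r.1 = i, need bounds on r.2
      subst he
      refine ⟨⟨h1, h2⟩, by omega, ?_⟩
      by_contra hcon
      push_neg at hcon
      -- r.2 ≥ q.1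
      rcases Nat.lt_or_ge r.2 q.2 with h3 | h3
      · rcases Nat.eq_or_lt_of_le hcon with heq | hlt'
        · -- r.2 = q.1 : r = q by uniqueness, contradiction
          have := huni q.1 (by omega) r hr (Or.inr heq.symm) q hq (Or.inl rfl)
          subst this
          omega
        · exact hcross r hr q hq ⟨by omega, hlt', h3⟩
      · rcases Nat.eq_or_lt_of_le h3 with heq | hlt'
        · have := huni q.2 (by omega) r hr (Or.inr heq.symm) q hq (Or.inr rfl)
          subst this
          omega
        · rcases Nat.lt_or_ge r.2 p.2 with h4 | h4
          · have := himm r hr (by omega) (by omega) hlt'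
            omega
          · rcases Nat.eq_or_lt_of_le h4 with heq | hlt''
            · have := huni p.2 hbm r hr (Or.inr heq.symm) p hp (Or.inr rfl)
              subst this
              omega
            · exact hcross p hp r hr ⟨by omega, by omega, hlt''⟩
    · -- r.2 = i, need bounds on r.1
      subst he
      refine ⟨⟨?_, by omega⟩, h1, h2⟩
      by_contra hcon
      push_neg at hcon
      rcases Nat.eq_or_lt_of_le hcon with heq | hlt'
      · have := huni p.1 (by omega) r hr (Or.inl heq) p hp (Or.inl rfl)
        subst this
        omega
      · exact hcross r hr p hp ⟨hlt', by omega, by omega⟩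
  · -- gap (q.2, p.2)
    apply even_gap m M hb hcov q.2 p.2 (by omega)
    intro r hr i h1 h2 hei
    have hrlt := hb r hr
    rcases hei with he | he
    · -- r.1 = i, need r.2 < p.2
      subst he
      refine ⟨⟨h1, h2⟩, by omega, ?_⟩
      by_contra hcon
      push_neg at hcon
      rcases Nat.eq_or_lt_of_le hcon with heq | hlt'
      · have := huni p.2 hbm r hr (Or.inr heq.symm) p hp (Or.inr rfl)
        subst this
        omega
      · exact hcross p hp r hr ⟨by omega, by omega, hlt'⟩
    · -- r.2 = i, need q.2 < r.1
      subst he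
      refine ⟨⟨?_, by omega⟩, h1, h2⟩
      by_contra hcon
      push_neg at hcon
      -- r.1 ≤ q.2
      rcases Nat.lt_or_ge r.1 p.1 with h3 | h3
      · exact hcross r hr p hp ⟨by omega, by omega, by omega⟩
      · rcases Nat.eq_or_lt_of_le h3 with heq | hlt'
        · have := huni p.1 (by omega) r hr (Or.inl heq.symm) p hp (Or.inl rfl)
          subst this
          omega
        · rcases Nat.lt_or_ge r.1 q.1 with h4 | h4
          · have := himm r hr hlt' h4 (by omega)
            omega
          · rcases Nat.eq_or_lt_of_le h4 with heq | hlt''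
            · have := huni q.1 (by omega) r hr (Or.inl heq.symm) q hq (Or.inl rfl)
              subst this
              omega
            · rcases Nat.eq_or_lt_of_le hcon with heq2 | hlt3
              · have := huni q.2 (by omega) r hr (Or.inl heq2) q hq (Or.inr rfl)
                subst this
                omega
              · exact hcross q hq r hr ⟨hlt'', by omega, by omega⟩
end

section
/- For n even and any reals x_0,…,x_{n−3}, the tropical minors Δ^Trop_{ab}(x) = min(x_{a−2},…,x_{b−3}) for 2 ≤ a ≤ b−1, 4 ≤ b ≤ n (with x_0 := 0, Δ^Trop_{ab} = 0 otherwise) satisfy the tropical Plücker relation: for all a < b < c < d, Δ^Trop_{ac} + Δ^Trop_{bd} = min(Δ^Trop_{ab} + Δ^Trop_{cd}, Δ^Trop_{ad} + Δ^Trop_{bc}). -/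
/-- The tropicalized Plücker coordinate `Δ^Trop_{ab}(x) = min(x_{a-2}, …, x_{b-3})`
for `2 ≤ a ≤ b - 1` and `4 ≤ b ≤ n`, and `0` otherwise (with the convention `x_0 = 0`
imposed as a hypothesis on `x`). -/
noncomputable def tropMinor (n : ℕ) (x : ℕ → ℝ) (a b : ℕ) : ℝ :=
  if 2 ≤ a ∧ a + 1 ≤ b ∧ 4 ≤ b ∧ b ≤ n then sInf (x '' Set.Icc (a - 2) (b - 3)) else 0

private lemma sInf_image_split (x : ℕ → ℝ) {i j j' k : ℕ} (hj' : j' = j + 1)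
    (h1 : i ≤ j) (h2 : j < k) :
    sInf (x '' Set.Icc i k) = min (sInf (x '' Set.Icc i j)) (sInf (x '' Set.Icc j' k)) := by
  have hset : Set.Icc i k = Set.Icc i j ∪ Set.Icc j' k := by
    ext m; simp only [Set.mem_Icc, Set.mem_union]; omega
  rw [hset, Set.image_union]
  have hb1 : BddBelow (x '' Set.Icc i j) := ((Set.finite_Icc i j).image x).bddBelow
  have hb2 : BddBelow (x '' Set.Icc j' k) := ((Set.finite_Icc j' k).image x).bddBelow
  have hn1 : (x '' Set.Icc i j).Nonempty := (Set.nonempty_Icc.2 h1).image x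
  have hn2 : (x '' Set.Icc j' k).Nonempty := (Set.nonempty_Icc.2 (by omega)).image x
  exact csInf_union hb1 hn1 hb2 hn2

private lemma tropMinor_eq (n : ℕ) (x : ℕ → ℝ) (hx0 : x 0 = 0) {u v : ℕ}
    (hu : 2 ≤ u) (huv : u < v) (hv : v ≤ n) :
    tropMinor n x u v = sInf (x '' Set.Icc (u - 2) (v - 3)) := by
  unfold tropMinor
  by_cases h4 : 4 ≤ v
  · rw [if_pos ⟨hu, by omega, h4, hv⟩]
  · have hv3 : v = 3 := by omega
    have hu2 : u = 2 := by omega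
    rw [if_neg (by omega)]
    subst hv3; subst hu2
    simp [hx0]

private lemma trop_key (p q r : ℝ) :
    min p q + min q r = min (p + r) (min p (min q r) + q) := by
  rcases le_total p q with h1 | h1 <;> rcases le_total q r with h2 | h2 <;>
    rcases le_total p r with h3 | h3 <;>
    simp [min_def] <;> split_ifs <;> linarith

/-- For `n` even and any reals `x` (with `x_0 = 0`), the tropical minors satisfy the
(positive) tropical Plücker relation: for all `1 ≤ a < b < c < d ≤ n`,
`Δ^Trop_{ac} + Δ^Trop_{bd} = min(Δ^Trop_{ab} + Δ^Trop_{cd}, Δ^Trop_{ad} + Δ^Trop_{bc})`. -/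
theorem tropical_plucker_relation (n : ℕ) (he : Even n) (x : ℕ → ℝ) (hx0 : x 0 = 0)
    (a b c d : ℕ) (ha : 1 ≤ a) (hab : a < b) (hbc : b < c) (hcd : c < d) (hdn : d ≤ n) :
    tropMinor n x a c + tropMinor n x b d =
      min (tropMinor n x a b + tropMinor n x c d)
        (tropMinor n x a d + tropMinor n x b c) := by
  set p := sInf (x '' Set.Icc (a - 2) (b - 3)) with hp
  set q := sInf (x '' Set.Icc (b - 2) (c - 3)) with hq
  set r := sInf (x '' Set.Icc (c - 2) (d - 3)) with hr
  by_cases ha2 : 2 ≤ a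
  · -- all minors take the sInf form
    have hb3 : 3 ≤ b := by omega
    have hac : tropMinor n x a c = min p q := by
      rw [tropMinor_eq n x hx0 ha2 (by omega) (by omega),
        sInf_image_split x (j := b - 3) (j' := b - 2) (by omega) (by omega) (by omega)]
    have hbd : tropMinor n x b d = min q r := by
      rw [tropMinor_eq n x hx0 (by omega) (by omega) hdn,
        sInf_image_split x (j := c - 3) (j' := c - 2) (by omega) (by omega) (by omega)]
    have hab' : tropMinor n x a b = p := tropMinor_eq n x hx0 ha2 hab (by omega)
    have hcd' : tropMinor n x c d = r := tropMinor_eq n x hx0 (by omega) hcd hdn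
    have hbc' : tropMinor n x b c = q := tropMinor_eq n x hx0 (by omega) hbc (by omega)
    have had : tropMinor n x a d = min p (min q r) := by
      rw [tropMinor_eq n x hx0 ha2 (by omega) hdn,
        sInf_image_split x (j := c - 3) (j' := c - 2) (by omega) (by omega) (by omega),
        sInf_image_split x (j := b - 3) (j' := b - 2) (by omega) (by omega) (by omega),
        min_assoc]
    rw [hac, hbd, hab', hcd', hbc', had]
    exact trop_key p q r
  · -- a = 1 : all minors with first index a vanish
    have ha1 : a = 1 := by omega
    have hzac : tropMinor n x a c = 0 := by rw [tropMinor, if_neg (by omega)]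
    have hzab : tropMinor n x a b = 0 := by rw [tropMinor, if_neg (by omega)]
    have hzad : tropMinor n x a d = 0 := by rw [tropMinor, if_neg (by omega)]
    rw [hzac, hzab, hzad, zero_add, zero_add, zero_add]
    by_cases hc4 : 4 ≤ c
    · have hbd : tropMinor n x b d = min q r := by
        rw [tropMinor_eq n x hx0 (by omega) (by omega) hdn,
          sInf_image_split x (j := c - 3) (j' := c - 2) (by omega) (by omega) (by omega)]
      have hcd' : tropMinor n x c d = r := tropMinor_eq n x hx0 (by omega) hcd hdn
      have hbc' : tropMinor n x b c = q := tropMinor_eq n x hx0 (by omega) hbc (by omega)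
      rw [hbd, hcd', hbc', min_comm]
    · -- c = 3, b = 2
      have hc3 : c = 3 := by omega
      have hb2 : b = 2 := by omega
      have hzbc : tropMinor n x b c = 0 := by rw [tropMinor, if_neg (by omega)]
      have hcd' : tropMinor n x c d = r := tropMinor_eq n x hx0 (by omega) hcd hdn
      have hbd : tropMinor n x b d = min 0 r := by
        rw [tropMinor_eq n x hx0 (by omega) (by omega) hdn,
          sInf_image_split x (j := 0) (j' := 1) rfl (by omega) (by omega)]
        have h1 : b - 2 = 0 := by omega
        have h2 : c - 2 = 1 := by omega
        rw [h1] at *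
        congr 1
        · simp [hx0]
        · rw [hr, h2]
      rw [hbd, hcd', hzbc, min_comm]
end
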